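/- arXiv:math/0410515 — 5 statements merged into one kernel-verified Lean document; each statement's English description precedes it below -/
import Mathlib

section
/- Let F be the free loop on one generator y. For every n ≥ 0 and m ≥ 1, the deviation (y^m, y, ..., y)_{1,...,1} of level n does not belong to γ3 F. Consequently, for every k ≥ 1, the k-th commutator-associator subloop F_k is not contained in γ3 F. -/
/-- A loop: a quasigroup with a two-sided identity. -/
class Loop (α : Type*) extends Mul α, One α where
  ldiv : α → α → α
  rdiv : α → α → α
  one_mul : ∀ a : α, 1 * a = a
  mul_one : ∀ a : α, a * 1 = a
  mul_ldiv : ∀ a b : α, a * ldiv a b = b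
  ldiv_mul : ∀ a b : α, ldiv a (a * b) = b
  rdiv_mul : ∀ a b : α, rdiv a b * b = a
  mul_rdiv : ∀ a b : α, rdiv (a * b) b = a

namespace Loop

variable {α : Type*} [Loop α]

/-- The commutator `[a,b] = (ba)\(ab)`. -/
def comm (a b : α) : α := ldiv (b * a) (a * b)

/-- The associator `(a,b,c) = (a(bc))\((ab)c)`. -/
def assoc (a b c : α) : α := ldiv (a * (b * c)) ((a * b) * c)

/-- The associator deviation indexed by a list of indices `αs = [α_n, ..., α_1]`
(stored with the *last* index first) applied to a list of arguments.
Level `0` (empty index list) is the associator. -/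
def dev : List ℕ → List α → α
  | [], [a, b, c] => assoc a b c
  | (k :: rest), args =>
      let A : α → α := fun x => dev rest (args.take (k - 1) ++ x :: args.drop (k + 1))
      ldiv (A (args.getD (k - 1) 1) * A (args.getD k 1))
        (A (args.getD (k - 1) 1 * args.getD k 1))
  | _, _ => 1

/-- A subset is a subloop if it contains `1` and is closed under
multiplication and both divisions. -/
def IsSubloop (S : Set α) : Prop :=
  (1 : α) ∈ S ∧ ∀ a ∈ S, ∀ b ∈ S, a * b ∈ S ∧ ldiv a b ∈ S ∧ rdiv a b ∈ S

/-- A subloop is normal if `xN = Nx`, `(Nx)y = N(xy)` and `y(xN) = (yx)N`. -/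
def IsNormal (S : Set α) : Prop :=
  IsSubloop S ∧
  (∀ x : α, {z | ∃ n ∈ S, z = x * n} = {z | ∃ n ∈ S, z = n * x}) ∧
  (∀ x y : α, {z | ∃ n ∈ S, z = (n * x) * y} = {z | ∃ n ∈ S, z = n * (x * y)}) ∧
  (∀ x y : α, {z | ∃ n ∈ S, z = y * (x * n)} = {z | ∃ n ∈ S, z = (y * x) * n})

/-- `N/M` is central in `L/M`: all commutators and associators involving an
element of `N` lie in `M`. -/
def CentralMod (N M : Set α) : Prop :=
  ∀ n ∈ N, ∀ x y : α,
    comm n x ∈ M ∧ comm x n ∈ M ∧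
    assoc n x y ∈ M ∧ assoc x n y ∈ M ∧ assoc x y n ∈ M

/-- `[N,L]`: the smallest normal subloop `M` such that `N/M` is central in `L/M`. -/
def bracket (N : Set α) : Set α := ⋂₀ {M | IsNormal M ∧ CentralMod N M}

end Loop

/-- The lower central series of a loop: `γ 1 = L`, `γ (i+1) = [γ i, L]`. -/
def Loop.gamma (α : Type*) [Loop α] : ℕ → Set α
  | 0 => Set.univ
  | 1 => Set.univ
  | (n + 2) => Loop.bracket (Loop.gamma α (n + 1))

namespace Loop

variable {α : Type*} [Loop α]

/-- A family `M i` of normal subloops is admissible for the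
commutator-associator filtration. -/
def Admissible (M : ℕ → Set α) : Prop :=
  (∀ i, IsNormal (M i)) ∧ M 1 = Set.univ ∧
  (∀ i p q, 1 ≤ p → 1 ≤ q → i ≤ p + q →
    ∀ a ∈ M p, ∀ b ∈ M q, comm a b ∈ M i) ∧
  (∀ i p q r, 1 ≤ p → 1 ≤ q → 1 ≤ r → i ≤ p + q + r →
    ∀ a ∈ M p, ∀ b ∈ M q, ∀ c ∈ M r, assoc a b c ∈ M i) ∧
  (∀ (i : ℕ) (idx ps : List ℕ) (xs : List α), idx ≠ [] →
    ps.length = idx.length + 3 → xs.length = idx.length + 3 →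
    (∀ j < idx.length, 1 ≤ idx.getD j 0 ∧ idx.getD j 0 ≤ (idx.length - j) + 2) →
    (∀ j < ps.length, 1 ≤ ps.getD j 0 ∧ xs.getD j 1 ∈ M (ps.getD j 0)) →
    i ≤ ps.sum → dev idx xs ∈ M i)

/-- The commutator-associator filtration: the smallest admissible family. -/
def casub (α : Type*) [Loop α] (i : ℕ) : Set α :=
  ⋂₀ {S | ∃ M : ℕ → Set α, Admissible M ∧ S = M i}

/-- Congruence modulo a (normal) subloop: `x ≡ y mod N` iff `x ∈ yN`. -/
def ModEq (N : Set α) (x y : α) : Prop := ∃ n ∈ N, x = y * n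

/-- Loop homomorphisms: maps preserving multiplication. -/
def IsLoopHom {β : Type*} [Loop β] (φ : α → β) : Prop :=
  ∀ a b : α, φ (a * b) = φ a * φ b

/-- The subloop generated by a subset. -/
def closure (S : Set α) : Set α := ⋂₀ {T | IsSubloop T ∧ S ⊆ T}

/-- Left-normed powers: `ypow y m = ((...(yy)y)...)y`. -/
def ypow (y : α) : ℕ → α
  | 0 => 1
  | (m + 1) => ypow y m * y

end Loop

section Higman

variable {L B : Type*} [Loop L] [AddCommGroup B]

/-- Multiplication in Higman's loop `(L, B)`. -/
def hmul (f : L → L → B) (x y : L × B) : L × B :=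
  (x.1 * y.1, x.2 + y.2 + f x.1 y.1)

/-- Left division in Higman's loop: `(l2,b2)\(l1,b1) = (l2\l1, b1-b2-f(l2, l2\l1))`. -/
def hldiv (f : L → L → B) (x y : L × B) : L × B :=
  (Loop.ldiv x.1 y.1, y.2 - x.2 - f x.1 (Loop.ldiv x.1 y.1))

/-- Right division in Higman's loop: `(l1,b1)/(l2,b2) = (l1/l2, b1-b2-f(l1/l2, l2))`. -/
def hrdiv (f : L → L → B) (x y : L × B) : L × B :=
  (Loop.rdiv x.1 y.1, x.2 - y.2 - f (Loop.rdiv x.1 y.1) y.1)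

/-- The commutator in Higman's loop. -/
def hcomm (f : L → L → B) (x y : L × B) : L × B :=
  hldiv f (hmul f y x) (hmul f x y)

/-- The associator in Higman's loop. -/
def hassoc (f : L → L → B) (x y z : L × B) : L × B :=
  hldiv f (hmul f x (hmul f y z)) (hmul f (hmul f x y) z)

end Higman

universe u

/-!
Send the free generator `y` to `(t, 0)` in Higman's central extension of the infinite cyclic
group `⟨t⟩` by `ℤ`, twisted by the normalized cocycle `f(t^a, t^b) = 1 - 2^a` if `b = 2` and `0`
otherwise. The base is an abelian group, so `γ₂ F` lands in the central fibre over `1`, and hence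
`γ₃ F` lies in the kernel. On the other hand, `(y^m, y, ..., y)` maps to `(1, 2^m - 1)` at every
level `n`: at level `0` this is the associator, and the recursion
`D_{n+1}(a) = D_n(a + 1) - D_n(a) - D_n(1)` fixes `a ↦ 2^a - 1`. For `m = 1` and `n ≥ 1` it lies
in `F_k` for every `k ≤ n + 3`.
-/

namespace Loop

variable {α β γ : Type*} [Loop α] [Loop β] [Loop γ]

theorem mul_left_cancel {a b c : α} (h : a * b = a * c) : b = c := by
  rw [← ldiv_mul a b, h, ldiv_mul]

theorem mul_right_cancel {a b c : α} (h : b * a = c * a) : b = c := by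
  rw [← mul_rdiv b a, h, mul_rdiv]

@[simp] theorem ldiv_self (a : α) : ldiv a a = 1 := by
  simpa only [mul_one] using ldiv_mul a 1

@[simp] theorem rdiv_self (a : α) : rdiv a a = 1 := by
  simpa only [one_mul] using mul_rdiv 1 a

theorem comm_eq_one {a b : α} (h : b * a = a * b) : comm a b = 1 := by
  rw [comm, h, ldiv_self]

theorem assoc_eq_one {a b c : α} (h : a * (b * c) = a * b * c) : assoc a b c = 1 := by
  rw [assoc, h, ldiv_self]

theorem dev_cons_one (rest : List ℕ) (a b : α) (t : List α) :
    dev (1 :: rest) (a :: b :: t) =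
      ldiv (dev rest (a :: t) * dev rest (b :: t)) (dev rest ((a * b) :: t)) := by
  simp [dev]

namespace IsLoopHom

variable {φ : α → β} (hφ : IsLoopHom φ)
include hφ

theorem comp {ψ : β → γ} (hψ : IsLoopHom ψ) : IsLoopHom (ψ ∘ φ) := fun a b => by
  simp only [Function.comp_apply, hφ a b, hψ (φ a) (φ b)]

theorem map_one : φ 1 = 1 :=
  mul_left_cancel (a := φ 1) (by rw [← hφ, mul_one, mul_one])

theorem map_ldiv (a b : α) : φ (ldiv a b) = ldiv (φ a) (φ b) :=
  mul_left_cancel (a := φ a) (by rw [← hφ, mul_ldiv, mul_ldiv])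

theorem map_rdiv (a b : α) : φ (rdiv a b) = rdiv (φ a) (φ b) :=
  mul_right_cancel (a := φ b) (by rw [← hφ, rdiv_mul, rdiv_mul])

theorem map_comm (a b : α) : φ (comm a b) = comm (φ a) (φ b) := by
  rw [comm, comm, hφ.map_ldiv, hφ, hφ]

theorem map_assoc (a b c : α) : φ (assoc a b c) = assoc (φ a) (φ b) (φ c) := by
  rw [assoc, assoc, hφ.map_ldiv, hφ, hφ, hφ, hφ]

theorem map_ypow (a : α) (m : ℕ) : φ (ypow a m) = ypow (φ a) m := by
  induction m with
  | zero => exact hφ.map_one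
  | succ k ih => rw [ypow, ypow, hφ, ih]

theorem map_getD (l : List α) (j : ℕ) : (l.map φ).getD j 1 = φ (l.getD j 1) := by
  rw [List.getD_eq_getElem?_getD, List.getD_eq_getElem?_getD, List.getElem?_map]
  cases l[j]? <;> simp [hφ.map_one]

theorem map_dev (idx : List ℕ) (args : List α) : φ (dev idx args) = dev idx (args.map φ) := by
  induction idx generalizing args with
  | nil =>
    match args with
    | [a, b, c] => simp [dev, hφ.map_assoc]
    | [] | [_] | [_, _] | _ :: _ :: _ :: _ :: _ => simp [dev, hφ.map_one]
  | cons k rest ih =>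
    simp only [dev, hφ.map_ldiv, hφ _ _, ih, List.map_append, List.map_cons, List.map_take,
      List.map_drop, hφ.map_getD]

end IsLoopHom

end Loop

namespace Loop

variable {α β : Type*} [Loop β]

def ker (φ : α → β) : Set α := {x | φ x = 1}

theorem image_ker_eq_fiber {φ : α → β} {g s : α → α} {c : β}
    (hg : ∀ n, φ n = 1 → φ (g n) = c)
    (hs : ∀ z, φ z = c → φ (s z) = 1 ∧ g (s z) = z) :
    {z | ∃ n ∈ ker φ, z = g n} = {z | φ z = c} := by
  ext z
  constructor
  · rintro ⟨n, hn, rfl⟩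
    exact hg n hn
  · intro hz
    exact ⟨s z, (hs z hz).1, (hs z hz).2.symm⟩

variable [Loop α]

section Ker

variable {φ : α → β} (hφ : IsLoopHom φ)
include hφ

theorem isSubloop_ker : IsSubloop (ker φ) := by
  refine ⟨hφ.map_one, fun a (ha : φ a = 1) b (hb : φ b = 1) => ⟨?_, ?_, ?_⟩⟩
  · show φ (a * b) = 1
    rw [hφ, ha, hb, mul_one]
  · show φ (ldiv a b) = 1
    rw [hφ.map_ldiv, ha, hb, ldiv_self]
  · show φ (rdiv a b) = 1
    rw [hφ.map_rdiv, ha, hb, rdiv_self]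

theorem isNormal_ker : IsNormal (ker φ) := by
  refine ⟨isSubloop_ker hφ, fun x => ?_, fun x y => ?_, fun x y => ?_⟩
  · rw [image_ker_eq_fiber (s := ldiv x) (fun n hn => by rw [hφ, hn, mul_one])
        (fun z hz => ⟨by rw [hφ.map_ldiv, hz, ldiv_self], mul_ldiv x z⟩),
      image_ker_eq_fiber (s := fun z => rdiv z x) (fun n hn => by rw [hφ, hn, one_mul])
        (fun z hz => ⟨by rw [hφ.map_rdiv, hz, rdiv_self], rdiv_mul z x⟩)]
  · rw [image_ker_eq_fiber (s := fun z => rdiv (rdiv z y) x)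
        (fun n hn => by rw [hφ, hφ, hn, one_mul])
        (fun z hz => ⟨by rw [hφ.map_rdiv, hφ.map_rdiv, hz, mul_rdiv, rdiv_self], by
          rw [rdiv_mul, rdiv_mul]⟩),
      image_ker_eq_fiber (s := fun z => rdiv z (x * y))
        (fun n hn => by rw [hφ, hφ, hn, one_mul])
        (fun z hz => ⟨by rw [hφ.map_rdiv, hφ, hz, rdiv_self], rdiv_mul z _⟩)]
  · rw [image_ker_eq_fiber (s := fun z => ldiv x (ldiv y z))
        (fun n hn => by rw [hφ, hφ, hn, mul_one])
        (fun z hz => ⟨by rw [hφ.map_ldiv, hφ.map_ldiv, hz, ldiv_mul, ldiv_self], by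
          rw [mul_ldiv, mul_ldiv]⟩),
      image_ker_eq_fiber (s := ldiv (y * x))
        (fun n hn => by rw [hφ, hφ, hn, mul_one])
        (fun z hz => ⟨by rw [hφ.map_ldiv, hφ, hz, ldiv_self], mul_ldiv _ z⟩)]

end Ker

def IsCentral (z : α) : Prop :=
  ∀ x y : α,
    comm z x = 1 ∧ comm x z = 1 ∧ assoc z x y = 1 ∧ assoc x z y = 1 ∧ assoc x y z = 1

theorem bracket_subset_ker {φ : α → β} (hφ : IsLoopHom φ) {N : Set α}
    (hN : ∀ n ∈ N, IsCentral (φ n)) : bracket N ⊆ ker φ := by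
  refine Set.sInter_subset_of_mem ⟨isNormal_ker hφ, fun n hn x y => ?_⟩
  simp only [ker, Set.mem_ofPred_eq, hφ.map_comm, hφ.map_assoc]
  exact hN n hn (φ x) (φ y)

end Loop

namespace Loop

instance ofGroup {G : Type*} [Group G] : Loop G where
  mul a b := a * b
  one := 1
  ldiv a b := a⁻¹ * b
  rdiv a b := a * b⁻¹
  one_mul := _root_.one_mul
  mul_one := _root_.mul_one
  mul_ldiv := mul_inv_cancel_left
  ldiv_mul := inv_mul_cancel_left
  rdiv_mul := inv_mul_cancel_right
  mul_rdiv := mul_inv_cancel_right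

@[simp] theorem ldiv_eq_inv_mul {G : Type*} [Group G] (a b : G) : ldiv a b = a⁻¹ * b := rfl

theorem isCentral_of_commGroup {G : Type*} [CommGroup G] (z : G) : IsCentral z := fun x _ =>
  ⟨comm_eq_one (_root_.mul_comm x z), comm_eq_one (_root_.mul_comm z x),
    assoc_eq_one (_root_.mul_assoc _ _ _).symm, assoc_eq_one (_root_.mul_assoc _ _ _).symm,
    assoc_eq_one (_root_.mul_assoc _ _ _).symm⟩

end Loop

structure NormalizedCocycle (L B : Type*) [Loop L] [AddCommGroup B] where
  toFun : L → L → B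
  map_one_left : ∀ x, toFun 1 x = 0
  map_one_right : ∀ x, toFun x 1 = 0

section Higman

variable {L B : Type*} [Loop L] [AddCommGroup B]

@[ext] structure Higman (f : NormalizedCocycle L B) where
  base : L
  fiber : B

namespace Higman

variable {f : NormalizedCocycle L B}

instance : Mul (Higman f) :=
  ⟨fun x y => ⟨x.base * y.base, x.fiber + y.fiber + f.toFun x.base y.base⟩⟩

instance : One (Higman f) := ⟨⟨1, 0⟩⟩

def ldiv (x y : Higman f) : Higman f :=
  ⟨Loop.ldiv x.base y.base, y.fiber - x.fiber - f.toFun x.base (Loop.ldiv x.base y.base)⟩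

def rdiv (x y : Higman f) : Higman f :=
  ⟨Loop.rdiv x.base y.base, x.fiber - y.fiber - f.toFun (Loop.rdiv x.base y.base) y.base⟩

@[simp] theorem base_mul (x y : Higman f) : (x * y).base = x.base * y.base := rfl

@[simp] theorem fiber_mul (x y : Higman f) :
    (x * y).fiber = x.fiber + y.fiber + f.toFun x.base y.base := rfl

@[simp] theorem base_one : (1 : Higman f).base = 1 := rfl

@[simp] theorem fiber_one : (1 : Higman f).fiber = 0 := rfl

instance : Loop (Higman f) where
  ldiv := ldiv
  rdiv := rdiv
  one_mul a := Higman.ext (Loop.one_mul a.base) (by simp [f.map_one_left])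
  mul_one a := Higman.ext (Loop.mul_one a.base) (by simp [f.map_one_right])
  mul_ldiv a b := Higman.ext (Loop.mul_ldiv a.base b.base) (by simp [ldiv]; abel)
  ldiv_mul a b :=
    Higman.ext (Loop.ldiv_mul a.base b.base) (by simp [ldiv, Loop.ldiv_mul]; abel)
  rdiv_mul a b := Higman.ext (Loop.rdiv_mul a.base b.base) (by simp [rdiv]; abel)
  mul_rdiv a b :=
    Higman.ext (Loop.mul_rdiv a.base b.base) (by simp [rdiv, Loop.mul_rdiv]; abel)

@[simp] theorem base_ldiv (x y : Higman f) :
    (Loop.ldiv x y).base = Loop.ldiv x.base y.base := rfl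

@[simp] theorem fiber_ldiv (x y : Higman f) :
    (Loop.ldiv x y).fiber = y.fiber - x.fiber - f.toFun x.base (Loop.ldiv x.base y.base) := rfl

theorem isLoopHom_base : Loop.IsLoopHom (base : Higman f → L) := fun _ _ => rfl

theorem isCentral_of_base_eq_one {z : Higman f} (hz : z.base = 1) : Loop.IsCentral z := by
  have hmul_left (x : Higman f) : z * x = ⟨x.base, z.fiber + x.fiber⟩ :=
    Higman.ext (by simp [hz, Loop.one_mul]) (by simp [hz, f.map_one_left])
  have hmul_right (x : Higman f) : x * z = ⟨x.base, x.fiber + z.fiber⟩ :=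
    Higman.ext (by simp [hz, Loop.mul_one]) (by simp [hz, f.map_one_right])
  intro x y
  refine ⟨Loop.comm_eq_one ?_, Loop.comm_eq_one ?_, Loop.assoc_eq_one ?_, Loop.assoc_eq_one ?_,
    Loop.assoc_eq_one ?_⟩ <;>
    simp only [hmul_left, hmul_right] <;> ext <;> simp <;> abel

end Higman

end Higman

namespace Loop

variable {α : Type*} [Loop α]

theorem gamma_two_subset_ker {β : Type*} [Loop β] {φ : α → β} (hφ : IsLoopHom φ)
    (hβ : ∀ z : β, IsCentral z) : gamma α 2 ⊆ ker φ :=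
  bracket_subset_ker hφ fun n _ => hβ (φ n)

theorem gamma_three_subset_ker {L B : Type*} [Loop L] [AddCommGroup B]
    {f : NormalizedCocycle L B} {φ : α → Higman f} (hφ : IsLoopHom φ)
    (hL : ∀ z : L, IsCentral z) : gamma α 3 ⊆ ker φ :=
  bracket_subset_ker hφ fun _ hn =>
    Higman.isCentral_of_base_eq_one (gamma_two_subset_ker (hφ.comp Higman.isLoopHom_base) hL hn)

theorem dev_replicate_one_mem_casub {n i : ℕ} (hn : n ≠ 0) {xs : List α}
    (hxs : xs.length = n + 3) (hi : i ≤ n + 3) : dev (List.replicate n 1) xs ∈ casub α i := by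
  rintro _ ⟨M, ⟨-, hM1, -, -, hdev⟩, rfl⟩
  refine hdev i _ (List.replicate (n + 3) 1) xs (by simpa using hn) (by simp) (by simpa using hxs)
    (fun j hj => ?_) (fun j hj => ?_) (by simpa using hi)
  · simp only [List.length_replicate] at hj
    simp [List.getD_eq_getElem?_getD, hj]
  · simp only [List.length_replicate] at hj
    simp [List.getD_eq_getElem?_getD, hj, hM1]

end Loop

def zGen : ULift.{u} (Multiplicative ℤ) := ⟨.ofAdd 1⟩

@[simp] theorem toAdd_down_zGen : (zGen.{u}).down.toAdd = 1 := rfl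

@[simp] theorem toAdd_down_zGen_pow (k : ℕ) : (zGen.{u} ^ k).down.toAdd = k := by
  simp [zGen, ULift.pow_down, toAdd_pow]

def twoPowCocycle : NormalizedCocycle (ULift.{u} (Multiplicative ℤ)) ℤ where
  toFun a b := if b.down.toAdd = 2 then 1 - 2 ^ a.down.toAdd.toNat else 0
  map_one_left := by simp
  map_one_right := by simp

theorem twoPowCocycle_apply (a b : ULift.{u} (Multiplicative ℤ)) :
    twoPowCocycle.toFun a b = if b.down.toAdd = 2 then 1 - 2 ^ a.down.toAdd.toNat else 0 := rfl

theorem mk_zGen_pow_mul_zGen (a : ℕ) (c : ℤ) :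
    (⟨zGen ^ a, c⟩ * ⟨zGen, 0⟩ : Higman twoPowCocycle.{u}) = ⟨zGen ^ (a + 1), c⟩ :=
  Higman.ext (pow_succ zGen a).symm (by simp [twoPowCocycle_apply])

theorem ypow_mk_zGen (m : ℕ) :
    Loop.ypow (⟨zGen, 0⟩ : Higman twoPowCocycle.{u}) m = ⟨zGen ^ m, 0⟩ := by
  induction m with
  | zero => rfl
  | succ m ih => rw [Loop.ypow, ih, mk_zGen_pow_mul_zGen]

open Loop in
theorem dev_twoPowCocycle (n a : ℕ) (c : ℤ) :
    dev (List.replicate n 1)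
        ((⟨zGen ^ a, c⟩ : Higman twoPowCocycle.{u}) :: List.replicate (n + 2) ⟨zGen, 0⟩) =
      ⟨1, 2 ^ a - 1⟩ := by
  induction n generalizing a c with
  | zero =>
    ext
    · simp [dev, assoc, mul_assoc]
    · simp [dev, assoc, twoPowCocycle_apply, mul_assoc]
  | succ n ih =>
    rw [List.replicate_succ, List.replicate_succ (n := n + 2), dev_cons_one]
    have hgen := ih 1 0
    rw [pow_one] at hgen
    rw [ih a c, hgen, mk_zGen_pow_mul_zGen, ih (a + 1) c]
    ext
    · simp
    · simp [twoPowCocycle_apply, pow_succ]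
      ring

/-- Theorem 1: let `F` be the free loop on one generator `y`.
For every `n ≥ 0` and `m ≥ 1`, the level-`n` deviation
`(y^m, y, ..., y)_{1,...,1}` does not belong to `γ₃ F`; consequently, for
every `k ≥ 1` the `k`-th commutator-associator subloop `F_k` is not contained
in `γ₃ F`. -/
theorem casub_not_in_gamma3 {F : Type u} [Loop F] (y : F)
    (hfree : ∀ (M : Type u) [Loop M] (m : M),
      ∃! φ : F → M, Loop.IsLoopHom φ ∧ φ y = m) :
    (∀ (n m : ℕ), 1 ≤ m →
      Loop.dev (List.replicate n 1) (Loop.ypow y m :: List.replicate (n + 2) y)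
        ∉ Loop.gamma F 3) ∧
    (∀ k : ℕ, 1 ≤ k → ¬ Loop.casub F k ⊆ Loop.gamma F 3) := by
  obtain ⟨φ, ⟨hφ, hy⟩, -⟩ := hfree (Higman twoPowCocycle.{u}) ⟨zGen, 0⟩
  have hdev (n m : ℕ) (hm : 1 ≤ m) :
      Loop.dev (List.replicate n 1) (Loop.ypow y m :: List.replicate (n + 2) y)
        ∉ Loop.gamma F 3 := by
    intro hmem
    have hker := Loop.gamma_three_subset_ker hφ Loop.isCentral_of_commGroup hmem
    rw [Loop.ker, Set.mem_ofPred_eq, hφ.map_dev, List.map_cons, List.map_replicate, hφ.map_ypow,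
      hy, ypow_mk_zGen, dev_twoPowCocycle] at hker
    have hfiber : (2 : ℤ) ^ m - 1 = 0 := congrArg Higman.fiber hker
    have hpow : (1 : ℤ) < 2 ^ m := one_lt_pow₀ one_lt_two (by omega)
    omega
  refine ⟨hdev, fun k hk hsub => hdev k 1 le_rfl (hsub ?_)⟩
  exact Loop.dev_replicate_one_mem_casub (by omega) (by simp) (by omega)
end

section
/- For any loop L, γ2 L = L_2: the second term of the lower central series coincides with the second commutator-associator subloop, and both equal the smallest normal subloop N such that L/N is an abelian group. -/
/-!
For `γ₁ = L`, centrality of `L/M` says exactly that `M` contains every commutator and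
associator, so `γ₂` is the intersection of the normal subloops with this property. Each of
the three normality conditions compares the images of `N` under two bijections of `L`, hence
survives intersections, and `γ₂` is the least such subloop. So is `L₂`: an admissible family
has `M₁ = L`, so `M₂` contains all commutators and associators; conversely, for such an `N`
the family `L, L, N, N, …` is admissible, a deviation being built from associators by
multiplications and left divisions.
-/

theorem Set.setOf_sInter_subset {α : Type*} {f g : α → α} (hg : Function.Bijective g)
    {𝒮 : Set (Set α)}
    (h : ∀ S ∈ 𝒮, {z | ∃ n ∈ S, z = f n} ⊆ {z | ∃ n ∈ S, z = g n}) :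
    {z | ∃ n ∈ ⋂₀ 𝒮, z = f n} ⊆ {z | ∃ n ∈ ⋂₀ 𝒮, z = g n} := by
  rintro _ ⟨n, hn, rfl⟩
  obtain ⟨m, hm⟩ := hg.2 (f n)
  refine ⟨m, fun S hS => ?_, hm.symm⟩
  obtain ⟨m', hm', hfn⟩ := h S hS ⟨n, hn S hS, rfl⟩
  rwa [hg.1 (hm.trans hfn)]

theorem Set.setOf_sInter_eq {α : Type*} {f g : α → α} (hf : Function.Bijective f)
    (hg : Function.Bijective g) {𝒮 : Set (Set α)}
    (h : ∀ S ∈ 𝒮, {z | ∃ n ∈ S, z = f n} = {z | ∃ n ∈ S, z = g n}) :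
    {z | ∃ n ∈ ⋂₀ 𝒮, z = f n} = {z | ∃ n ∈ ⋂₀ 𝒮, z = g n} :=
  subset_antisymm (setOf_sInter_subset hg fun S hS => (h S hS).le)
    (setOf_sInter_subset hf fun S hS => (h S hS).ge)

namespace Loop

variable {α : Type*} [Loop α]

theorem mul_left_bijective (x : α) : Function.Bijective (x * ·) :=
  ⟨fun a b (hab : x * a = x * b) => by rw [← ldiv_mul x a, hab, ldiv_mul], fun b => ⟨ldiv x b, mul_ldiv x b⟩⟩

theorem mul_right_bijective (x : α) : Function.Bijective (· * x) :=
  ⟨fun a b (hab : a * x = b * x) => by rw [← mul_rdiv a x, hab, mul_rdiv], fun b => ⟨rdiv b x, rdiv_mul b x⟩⟩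

namespace IsSubloop

variable {S : Set α}

theorem one_mem (hS : IsSubloop S) : (1 : α) ∈ S := hS.1

theorem mul_mem (hS : IsSubloop S) {a b : α} (ha : a ∈ S) (hb : b ∈ S) : a * b ∈ S :=
  (hS.2 a ha b hb).1

theorem ldiv_mem (hS : IsSubloop S) {a b : α} (ha : a ∈ S) (hb : b ∈ S) : ldiv a b ∈ S :=
  (hS.2 a ha b hb).2.1

theorem rdiv_mem (hS : IsSubloop S) {a b : α} (ha : a ∈ S) (hb : b ∈ S) : rdiv a b ∈ S :=
  (hS.2 a ha b hb).2.2

end IsSubloop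

theorem isSubloop_sInter {𝒮 : Set (Set α)} (h : ∀ S ∈ 𝒮, IsSubloop S) : IsSubloop (⋂₀ 𝒮) :=
  ⟨fun S hS => (h S hS).one_mem, fun _ ha _ hb =>
    ⟨fun S hS => (h S hS).mul_mem (ha S hS) (hb S hS),
      fun S hS => (h S hS).ldiv_mem (ha S hS) (hb S hS),
      fun S hS => (h S hS).rdiv_mem (ha S hS) (hb S hS)⟩⟩

theorem isNormal_sInter {𝒮 : Set (Set α)} (h : ∀ S ∈ 𝒮, IsNormal S) : IsNormal (⋂₀ 𝒮) :=
  ⟨isSubloop_sInter fun S hS => (h S hS).1,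
    fun x => Set.setOf_sInter_eq (mul_left_bijective x) (mul_right_bijective x)
      fun S hS => (h S hS).2.1 x,
    fun x y => Set.setOf_sInter_eq ((mul_right_bijective y).comp (mul_right_bijective x))
      (mul_right_bijective (x * y)) fun S hS => (h S hS).2.2.1 x y,
    fun x y => Set.setOf_sInter_eq ((mul_left_bijective y).comp (mul_left_bijective x))
      (mul_left_bijective (y * x)) fun S hS => (h S hS).2.2.2 x y⟩

theorem isNormal_univ : IsNormal (Set.univ : Set α) :=
  Set.sInter_empty ▸ isNormal_sInter fun _ hS => absurd hS (Set.notMem_empty _)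

def IsAbelianQuotient (N : Set α) : Prop :=
  IsNormal N ∧ (∀ a b : α, comm a b ∈ N) ∧ ∀ a b c : α, assoc a b c ∈ N

theorem isAbelianQuotient_sInter {𝒩 : Set (Set α)} (h : ∀ N ∈ 𝒩, IsAbelianQuotient N) :
    IsAbelianQuotient (⋂₀ 𝒩) :=
  ⟨isNormal_sInter fun N hN => (h N hN).1, fun a b N hN => (h N hN).2.1 a b,
    fun a b c N hN => (h N hN).2.2 a b c⟩

theorem centralMod_univ_iff {M : Set α} :
    CentralMod Set.univ M ↔ (∀ a b : α, comm a b ∈ M) ∧ ∀ a b c : α, assoc a b c ∈ M :=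
  ⟨fun h => ⟨fun a b => (h a trivial b b).1, fun a b c => (h a trivial b c).2.2.1⟩,
    fun ⟨hc, ha⟩ n _ x y => ⟨hc n x, hc x n, ha n x y, ha x n y, ha x y n⟩⟩

theorem gamma_two_eq : gamma α 2 = ⋂₀ {N | IsAbelianQuotient N} := by
  show ⋂₀ {M | IsNormal M ∧ CentralMod Set.univ M} = _
  simp only [centralMod_univ_iff]
  rfl

theorem isAbelianQuotient_gamma_two : IsAbelianQuotient (gamma α 2) := by
  rw [gamma_two_eq]
  exact isAbelianQuotient_sInter fun _ hN => hN

theorem gamma_two_subset {N : Set α} (hN : IsAbelianQuotient N) : gamma α 2 ⊆ N := by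
  rw [gamma_two_eq]
  exact Set.sInter_subset_of_mem hN

theorem dev_mem {M : Set α} (hM : IsSubloop M) (hassoc : ∀ a b c : α, assoc a b c ∈ M) :
    ∀ (idx : List ℕ) (xs : List α), dev idx xs ∈ M
  | [], [] | [], [_] | [], [_, _] | [], _ :: _ :: _ :: _ :: _ => hM.one_mem
  | [], [a, b, c] => hassoc a b c
  | _ :: rest, _ =>
    hM.ldiv_mem (hM.mul_mem (dev_mem hM hassoc rest _) (dev_mem hM hassoc rest _))
      (dev_mem hM hassoc rest _)

theorem Admissible.isAbelianQuotient_two {M : ℕ → Set α} (hM : Admissible M) :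
    IsAbelianQuotient (M 2) := by
  obtain ⟨hnormal, hone, hcomm, hassoc, -⟩ := hM
  have mem_one (x : α) : x ∈ M 1 := hone ▸ Set.mem_univ x
  exact ⟨hnormal 2, fun a b => hcomm 2 1 1 le_rfl le_rfl le_rfl a (mem_one a) b (mem_one b),
    fun a b c => hassoc 2 1 1 1 le_rfl le_rfl le_rfl (by norm_num)
      a (mem_one a) b (mem_one b) c (mem_one c)⟩

theorem admissible_of_isAbelianQuotient {N : Set α} (hN : IsAbelianQuotient N) :
    Admissible fun i => if i ≤ 1 then Set.univ else N := by
  obtain ⟨hnormal, hcomm, hassoc⟩ := hN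
  have subset (i : ℕ) : N ⊆ if i ≤ 1 then Set.univ else N := by
    split_ifs
    exacts [Set.subset_univ N, subset_rfl]
  refine ⟨fun i => ?_, rfl, fun i _ _ _ _ _ a _ b _ => subset i (hcomm a b),
    fun i _ _ _ _ _ _ _ a _ b _ c _ => subset i (hassoc a b c),
    fun i idx _ xs _ _ _ _ _ _ => subset i (dev_mem hnormal.1 hassoc idx xs)⟩
  dsimp only
  split_ifs
  exacts [isNormal_univ, hnormal]

theorem casub_subset {M : ℕ → Set α} (hM : Admissible M) (i : ℕ) : casub α i ⊆ M i :=
  Set.sInter_subset_of_mem ⟨M, hM, rfl⟩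

theorem subset_casub {S : Set α} {i : ℕ} (h : ∀ M : ℕ → Set α, Admissible M → S ⊆ M i) :
    S ⊆ casub α i := by
  rintro x hx _ ⟨M, hM, rfl⟩
  exact h M hM hx

end Loop

/-- for any loop `L`, `γ₂ L = L₂`, and both coincide with the
smallest normal subloop `N` such that `L/N` is an abelian group (i.e. such
that all commutators and associators lie in `N`). -/
theorem gamma2_eq_casub2 {L : Type*} [Loop L] :
    Loop.gamma L 2 = Loop.casub L 2 ∧
    Loop.IsNormal (Loop.gamma L 2) ∧
    (∀ a b : L, Loop.comm a b ∈ Loop.gamma L 2) ∧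
    (∀ a b c : L, Loop.assoc a b c ∈ Loop.gamma L 2) ∧
    (∀ N : Set L, Loop.IsNormal N → (∀ a b : L, Loop.comm a b ∈ N) →
      (∀ a b c : L, Loop.assoc a b c ∈ N) → Loop.gamma L 2 ⊆ N) := by
  have hgamma : Loop.IsAbelianQuotient (Loop.gamma L 2) := Loop.isAbelianQuotient_gamma_two
  refine ⟨subset_antisymm ?_ ?_, hgamma.1, hgamma.2.1, hgamma.2.2,
    fun N hN hcomm hassoc => Loop.gamma_two_subset ⟨hN, hcomm, hassoc⟩⟩
  · exact Loop.subset_casub fun M hM => Loop.gamma_two_subset hM.isAbelianQuotient_two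
  · exact Loop.casub_subset (Loop.admissible_of_isAbelianQuotient hgamma) 2
end

section
/- For any loop L and every i ≥ 1, the lower central series term γ_i L is contained in the commutator-associator subloop L_i. -/
/-! Taking one argument in `M 1 = L`, the commutator and associator axioms of an admissible family
`M` say that `M k` is central modulo `M (k + 1)`; by minimality of the bracket, induction gives
`γ i ⊆ M i` for every admissible `M`, hence `γ i` lies in their intersection `L_i`. -/

namespace Loop

variable {α : Type*} [Loop α]

theorem bracket_subset {N M : Set α} (hM : IsNormal M) (hNM : CentralMod N M) :
    bracket N ⊆ M :=
  Set.sInter_subset_of_mem ⟨hM, hNM⟩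

namespace Admissible

variable {M : ℕ → Set α}

theorem mem_one (hM : Admissible M) (x : α) : x ∈ M 1 := by
  rw [hM.2.1]
  trivial

theorem centralMod_succ (hM : Admissible M) {k : ℕ} (hk : 1 ≤ k) :
    CentralMod (M k) (M (k + 1)) := by
  intro a ha x y
  have hx := hM.mem_one x
  have hy := hM.mem_one y
  obtain ⟨-, -, hcomm, hassoc, -⟩ := hM
  exact ⟨hcomm _ k 1 hk le_rfl le_rfl a ha x hx,
    hcomm _ 1 k le_rfl hk (by omega) x hx a ha,
    hassoc _ k 1 1 hk le_rfl le_rfl (by omega) a ha x hx y hy,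
    hassoc _ 1 k 1 le_rfl hk le_rfl (by omega) x hx a ha y hy,
    hassoc _ 1 1 k le_rfl le_rfl hk (by omega) x hx y hy a ha⟩

theorem gamma_subset (hM : Admissible M) : ∀ i, 1 ≤ i → gamma α i ⊆ M i
  | 0, h => absurd h (by omega)
  | 1, _ => fun x _ => hM.mem_one x
  | k + 2, _ => bracket_subset (hM.1 (k + 2)) fun a ha =>
      hM.centralMod_succ (Nat.le_add_left 1 k) a (hM.gamma_subset (k + 1) (by omega) ha)

end Admissible

end Loop

/-- for any loop `L` and every `i ≥ 1`, the lower central series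
term `γ_i L` is contained in the commutator-associator subloop `L_i`. -/
theorem gamma_subset_casub {L : Type*} [Loop L] :
    ∀ i : ℕ, 1 ≤ i → Loop.gamma L i ⊆ Loop.casub L i := by
  intro i hi x hx
  rintro _ ⟨M, hM, rfl⟩
  exact hM.gamma_subset i hi hx
end

section
/- In any loop L, the Akivis identity holds on the associated graded group of the commutator-associator filtration: for a ∈ L_p, b ∈ L_q, c ∈ L_r, writing the induced operations additively on gr L = ⊕ L_i/L_{i+1}, one has [[a,b],c] + [[b,c],a] + [[c,a],b] = (a,b,c) + (b,c,a) + (c,a,b) - (a,c,b) - (c,b,a) - (b,a,c) in L_{p+q+r}/L_{p+q+r+1}. -/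
/-!
Since `casub L i` is the intersection of the admissible families, it suffices to fix one such
family `M` and pass to the quotient loop `Q = L / M (n + 1)`, `n = p + q + r`. In `Q` the double
commutators and associators of `a, b, c` have weight `n` and are therefore central, while anything
of weight `> n` is trivial. Swapping the last two factors of `(xy)z` costs the commutator `[y,z]`
and two associators; swapping the first two costs `[x,y]` and the double commutator `[[x,y],z]`.
Carrying `(ab)c` to `(cb)a` along both sides of the hexagon of the six orderings of `a, b, c`
picks up the same commutators `[a,b], [b,c], [c,a]`, which commute with each other in `Q`;
cancelling them leaves the Akivis identity among the central elements.
-/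

theorem Subsemigroup.mul_coe_center_mul {M : Type*} [Mul M] (x y : M) (s : center M) :
    x * s * y = x * y * s :=
  ((Set.mem_center_iff.mp s.2).right_comm x y).symm

theorem Subsemigroup.mul_coe_center_mul_coe {M : Type*} [Mul M] (x : M) (s t : center M) :
    x * s * t = x * ↑(s * t) :=
  (Set.mem_center_iff.mp t.2).right_assoc x s

namespace Loop

variable {L : Type*} [Loop L]

theorem ldiv_eq_one_iff {a b : L} : ldiv a b = 1 ↔ b = a := by
  constructor
  · intro h
    rw [← Loop.mul_ldiv a b, h, Loop.mul_one]
  · intro h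
    rw [h, ← ldiv_mul a 1, Loop.mul_one]

theorem mul_mul_comm (a b : L) : b * a * comm a b = a * b := mul_ldiv _ _

theorem mul_mul_assoc (a b c : L) : a * (b * c) * assoc a b c = a * b * c := mul_ldiv _ _

theorem comm_eq_one_iff {a b : L} : comm a b = 1 ↔ a * b = b * a := ldiv_eq_one_iff

theorem assoc_eq_one_iff {a b c : L} : assoc a b c = 1 ↔ a * b * c = a * (b * c) :=
  ldiv_eq_one_iff

theorem mem_center_of_comm_eq_one (z : L) (hcomm : ∀ x, comm z x = 1)
    (hleft : ∀ x y, assoc z x y = 1) (hright : ∀ x y, assoc x y z = 1) :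
    z ∈ Set.center L :=
  Set.mem_center_iff.mpr
    { comm := fun x => comm_eq_one_iff.mp (hcomm x)
      left_assoc := fun x y => (assoc_eq_one_iff.mp (hleft x y)).symm
      right_assoc := fun x y => assoc_eq_one_iff.mp (hright x y) }

section IsLoopHom

variable {β : Type*} [Loop β] {φ : L → β}

theorem IsLoopHom.map_ldiv_s15 (hφ : IsLoopHom φ) (a b : L) : φ (ldiv a b) = ldiv (φ a) (φ b) := by
  rw [← ldiv_mul (φ a) (φ (ldiv a b)), ← hφ, mul_ldiv]

theorem IsLoopHom.map_comm_s15 (hφ : IsLoopHom φ) (a b : L) : φ (comm a b) = comm (φ a) (φ b) := by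
  rw [comm, hφ.map_ldiv_s15, hφ, hφ, comm]

theorem IsLoopHom.map_assoc_s15 (hφ : IsLoopHom φ) (a b c : L) :
    φ (assoc a b c) = assoc (φ a) (φ b) (φ c) := by
  rw [assoc, hφ.map_ldiv_s15, hφ, hφ, hφ, hφ, assoc]

end IsLoopHom

theorem modEq_iff_ldiv_mem {N : Set L} {x y : L} : ModEq N x y ↔ ldiv y x ∈ N := by
  constructor
  · rintro ⟨n, hn, rfl⟩
    rwa [ldiv_mul]
  · exact fun h => ⟨_, h, (mul_ldiv y x).symm⟩

namespace IsNormal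

variable {N : Set L}

theorem exists_mul_eq_mul_of_mem_right (hN : IsNormal N) (x : L) {n : L} (hn : n ∈ N) :
    ∃ n' ∈ N, x * n = n' * x :=
  (hN.2.1 x).subset ⟨n, hn, rfl⟩

theorem exists_mul_eq_mul_of_mem_left (hN : IsNormal N) (x : L) {n : L} (hn : n ∈ N) :
    ∃ n' ∈ N, n * x = x * n' :=
  (hN.2.1 x).superset ⟨n, hn, rfl⟩

theorem exists_mul_mul_eq_of_mem_left (hN : IsNormal N) (x y : L) {n : L} (hn : n ∈ N) :
    ∃ n' ∈ N, n * x * y = n' * (x * y) :=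
  (hN.2.2.1 x y).subset ⟨n, hn, rfl⟩

theorem exists_mul_mul_eq_of_mem_left' (hN : IsNormal N) (x y : L) {n : L} (hn : n ∈ N) :
    ∃ n' ∈ N, n * (x * y) = n' * x * y :=
  (hN.2.2.1 x y).superset ⟨n, hn, rfl⟩

theorem exists_mul_mul_eq_of_mem_right (hN : IsNormal N) (x y : L) {n : L} (hn : n ∈ N) :
    ∃ n' ∈ N, y * (x * n) = y * x * n' :=
  (hN.2.2.2 x y).subset ⟨n, hn, rfl⟩

theorem exists_mul_mul_eq_of_mem_right' (hN : IsNormal N) (x y : L) {n : L} (hn : n ∈ N) :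
    ∃ n' ∈ N, y * x * n = y * (x * n') :=
  (hN.2.2.2 x y).superset ⟨n, hn, rfl⟩

theorem modEq_refl (hN : IsNormal N) (x : L) : ModEq N x x :=
  ⟨1, hN.1.1, (Loop.mul_one x).symm⟩

theorem modEq_symm (hN : IsNormal N) {x y : L} (h : ModEq N x y) : ModEq N y x := by
  obtain ⟨m, hm, rfl⟩ := h
  obtain ⟨k, hk, hy⟩ := hN.exists_mul_mul_eq_of_mem_right m y (hN.1.2 m hm 1 hN.1.1).2.1
  rw [mul_ldiv, Loop.mul_one] at hy
  exact ⟨k, hk, hy⟩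

theorem modEq_trans (hN : IsNormal N) {x y z : L} (h₁ : ModEq N x y) (h₂ : ModEq N y z) :
    ModEq N x z := by
  obtain ⟨m, hm, rfl⟩ := h₁
  obtain ⟨k, hk, rfl⟩ := h₂
  obtain ⟨j, hj, e⟩ := hN.exists_mul_mul_eq_of_mem_right' k z hm
  exact ⟨k * j, (hN.1.2 k hk j hj).1, e⟩

theorem modEq_mul_left (hN : IsNormal N) (z : L) {x y : L} (h : ModEq N x y) :
    ModEq N (z * x) (z * y) := by
  obtain ⟨m, hm, rfl⟩ := h
  exact hN.exists_mul_mul_eq_of_mem_right y z hm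

theorem modEq_mul_right (hN : IsNormal N) (z : L) {x y : L} (h : ModEq N x y) :
    ModEq N (x * z) (y * z) := by
  obtain ⟨m, hm, rfl⟩ := h
  obtain ⟨k₁, hk₁, e₁⟩ := hN.exists_mul_eq_mul_of_mem_right y hm
  obtain ⟨k₂, hk₂, e₂⟩ := hN.exists_mul_mul_eq_of_mem_left y z hk₁
  obtain ⟨k₃, hk₃, e₃⟩ := hN.exists_mul_eq_mul_of_mem_left (y * z) hk₂
  exact ⟨k₃, hk₃, by rw [e₁, e₂, e₃]⟩

theorem modEq_mul (hN : IsNormal N) {x x' y y' : L} (hx : ModEq N x x') (hy : ModEq N y y') :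
    ModEq N (x * y) (x' * y') :=
  hN.modEq_trans (hN.modEq_mul_right y hx) (hN.modEq_mul_left x' hy)

theorem modEq_cancel_left (hN : IsNormal N) (z : L) {x y : L} (h : ModEq N (z * x) (z * y)) :
    ModEq N x y := by
  obtain ⟨m, hm, e⟩ := h
  obtain ⟨k, hk, e'⟩ := hN.exists_mul_mul_eq_of_mem_right' y z hm
  refine ⟨k, hk, ?_⟩
  rw [← ldiv_mul z x, e, e', ldiv_mul]

theorem modEq_cancel_right (hN : IsNormal N) (z : L) {x y : L} (h : ModEq N (x * z) (y * z)) :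
    ModEq N x y := by
  obtain ⟨m, hm, e⟩ := h
  obtain ⟨k₁, hk₁, e₁⟩ := hN.exists_mul_eq_mul_of_mem_right (y * z) hm
  obtain ⟨k₂, hk₂, e₂⟩ := hN.exists_mul_mul_eq_of_mem_left' y z hk₁
  obtain ⟨k₃, hk₃, e₃⟩ := hN.exists_mul_eq_mul_of_mem_left y hk₂
  refine ⟨k₃, hk₃, ?_⟩
  rw [← mul_rdiv x z, e, e₁, e₂, mul_rdiv, e₃]

theorem modEq_ldiv (hN : IsNormal N) {x x' y y' : L} (hx : ModEq N x x') (hy : ModEq N y y') :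
    ModEq N (ldiv x y) (ldiv x' y') := by
  refine hN.modEq_cancel_left x ?_
  rw [mul_ldiv]
  have h := hN.modEq_mul_right (ldiv x' y') (hN.modEq_symm hx)
  rw [mul_ldiv] at h
  exact hN.modEq_trans hy h

theorem modEq_rdiv (hN : IsNormal N) {x x' y y' : L} (hx : ModEq N x x') (hy : ModEq N y y') :
    ModEq N (rdiv x y) (rdiv x' y') := by
  refine hN.modEq_cancel_right y ?_
  rw [rdiv_mul]
  have h := hN.modEq_mul_left (rdiv x' y') (hN.modEq_symm hy)
  rw [rdiv_mul] at h
  exact hN.modEq_trans hx h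

def setoid (hN : IsNormal N) : Setoid L :=
  ⟨ModEq N, ⟨hN.modEq_refl, hN.modEq_symm, hN.modEq_trans⟩⟩

instance (hN : IsNormal N) : Loop (Quotient hN.setoid) where
  mul := Quotient.map₂ (· * ·) fun _ _ hx _ _ hy => hN.modEq_mul hx hy
  one := ⟦1⟧
  ldiv := Quotient.map₂ ldiv fun _ _ hx _ _ hy => hN.modEq_ldiv hx hy
  rdiv := Quotient.map₂ rdiv fun _ _ hx _ _ hy => hN.modEq_rdiv hx hy
  one_mul := by rintro ⟨x⟩; exact congrArg _ (Loop.one_mul x)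
  mul_one := by rintro ⟨x⟩; exact congrArg _ (Loop.mul_one x)
  mul_ldiv := by rintro ⟨x⟩ ⟨y⟩; exact congrArg _ (mul_ldiv x y)
  ldiv_mul := by rintro ⟨x⟩ ⟨y⟩; exact congrArg _ (ldiv_mul x y)
  rdiv_mul := by rintro ⟨x⟩ ⟨y⟩; exact congrArg _ (rdiv_mul x y)
  mul_rdiv := by rintro ⟨x⟩ ⟨y⟩; exact congrArg _ (mul_rdiv x y)

theorem isLoopHom_mk (hN : IsNormal N) : IsLoopHom (Quotient.mk hN.setoid) :=
  fun _ _ => rfl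

theorem mk_eq_one (hN : IsNormal N) {n : L} (hn : n ∈ N) :
    (⟦n⟧ : Quotient hN.setoid) = 1 :=
  Quotient.sound ⟨n, hn, (Loop.one_mul n).symm⟩

end IsNormal

theorem right_comm_mul_assoc (x y z : L) (h : assoc x (z * y) (comm y z) = 1)
    (hA : assoc x z y ∈ Set.center L) :
    x * y * z * assoc x z y = x * z * y * comm y z * assoc x y z := by
  have hxyz : x * y * z = x * (z * y) * comm y z * assoc x y z := by
    rw [assoc_eq_one_iff.mp h, mul_mul_comm, mul_mul_assoc]
  rw [hxyz, ← mul_mul_assoc x z y, (Set.mem_center_iff.mp hA).right_comm,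
    ← (Set.mem_center_iff.mp hA).right_comm (x * (z * y)) (comm y z)]

theorem left_comm_mul_comm (x y z : L) (h₁ : assoc (y * x) (comm x y) z = 1)
    (h₂ : assoc (y * x) z (comm x y) = 1) (hZ : comm (comm x y) z ∈ Set.center L) :
    x * y * z = y * x * z * comm x y * comm (comm x y) z :=
  calc x * y * z = y * x * comm x y * z := by rw [mul_mul_comm]
    _ = y * x * (comm x y * z) := assoc_eq_one_iff.mp h₁
    _ = y * x * (z * comm x y * comm (comm x y) z) := by rw [mul_mul_comm]
    _ = y * x * (z * comm x y) * comm (comm x y) z :=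
      ((Set.mem_center_iff.mp hZ).right_assoc _ _).symm
    _ = y * x * z * comm x y * comm (comm x y) z := by rw [assoc_eq_one_iff.mp h₂]

theorem mul_right_comm_of_comm_eq_one {u v : L} (x : L) (h : comm u v = 1)
    (huv : assoc x u v = 1) (hvu : assoc x v u = 1) : x * u * v = x * v * u := by
  rw [assoc_eq_one_iff.mp huv, assoc_eq_one_iff.mp hvu, comm_eq_one_iff.mp h]

theorem mul_left_cancel_s15 {x y z : L} (h : x * y = x * z) : y = z := by
  rw [← ldiv_mul x y, h, ldiv_mul]

open Subsemigroup in
theorem akivis_of_relations {a b c k₁ k₂ k₃ : L}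
    {ζ₁ ζ₂ ζ₃ α_abc α_bca α_cab α_acb α_cba α_bac : center L}
    (hB₁ : a * b * c * α_acb = a * c * b * k₂ * α_abc)
    (hB₂ : b * c * a * α_bac = b * a * c * k₃ * α_bca)
    (hB₃ : c * a * b * α_cba = c * b * a * k₁ * α_cab)
    (hC₁ : a * b * c = b * a * c * k₁ * ζ₁) (hC₂ : b * c * a = c * b * a * k₂ * ζ₂)
    (hC₃ : c * a * b = a * c * b * k₃ * ζ₃)
    (h₂₃ : a * c * b * k₂ * k₃ = a * c * b * k₃ * k₂)
    (h₁₃ : b * a * c * k₁ * k₃ = b * a * c * k₃ * k₁)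
    (h₂₁ : c * b * a * k₂ * k₁ = c * b * a * k₁ * k₂) :
    ζ₁ * ζ₂ * ζ₃ * (α_acb * α_cba * α_bac) = α_abc * α_bca * α_cab := by
  have shuffle : ∀ (x : L) (s : center L),
      x * s * k₁ = x * k₁ * s ∧ x * s * k₂ = x * k₂ * s ∧ x * s * k₃ = x * k₃ * s :=
    fun x s => ⟨mul_coe_center_mul x _ s, mul_coe_center_mul x _ s, mul_coe_center_mul x _ s⟩
  have path₁ : a * b * c * α_acb * k₃ * ↑(ζ₃ * α_cba * α_bca) =
      c * b * a * k₁ * k₂ * ↑(α_cab * α_abc * α_bca) :=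
    calc _ = a * c * b * k₂ * k₃ * ↑(α_abc * ζ₃ * α_cba * α_bca) := by
          rw [hB₁]; simp only [shuffle, mul_coe_center_mul_coe]; ac_rfl
      _ = a * c * b * k₃ * ζ₃ * k₂ * ↑(α_abc * α_cba * α_bca) := by
          rw [h₂₃]; simp only [shuffle, mul_coe_center_mul_coe]; ac_rfl
      _ = c * a * b * α_cba * k₂ * ↑(α_abc * α_bca) := by
          rw [← hC₃]; simp only [shuffle, mul_coe_center_mul_coe]; ac_rfl
      _ = _ := by
          rw [hB₃]; simp only [shuffle, mul_coe_center_mul_coe]; ac_rfl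
  have path₂ : a * b * c * α_acb * k₃ * ↑(ζ₃ * α_cba * α_bca) =
      c * b * a * k₁ * k₂ * ↑(ζ₂ * α_bac * ζ₁ * α_acb * ζ₃ * α_cba) :=
    calc _ = b * a * c * k₁ * k₃ * ↑(ζ₁ * α_acb * ζ₃ * α_cba * α_bca) := by
          rw [hC₁]; simp only [shuffle, mul_coe_center_mul_coe]; ac_rfl
      _ = b * a * c * k₃ * α_bca * k₁ * ↑(ζ₁ * α_acb * ζ₃ * α_cba) := by
          rw [h₁₃]; simp only [shuffle, mul_coe_center_mul_coe]; ac_rfl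
      _ = b * c * a * k₁ * ↑(α_bac * ζ₁ * α_acb * ζ₃ * α_cba) := by
          rw [← hB₂]; simp only [shuffle, mul_coe_center_mul_coe]; ac_rfl
      _ = c * b * a * k₂ * k₁ * ↑(ζ₂ * α_bac * ζ₁ * α_acb * ζ₃ * α_cba) := by
          rw [hC₂]; simp only [shuffle, mul_coe_center_mul_coe]; ac_rfl
      _ = _ := by rw [h₂₁]
  have key : α_cab * α_abc * α_bca = ζ₂ * α_bac * ζ₁ * α_acb * ζ₃ * α_cba :=
    Subtype.coe_injective (mul_left_cancel_s15 (path₁.symm.trans path₂))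
  calc _ = ζ₂ * α_bac * ζ₁ * α_acb * ζ₃ * α_cba := by ac_rfl
    _ = α_cab * α_abc * α_bca := key.symm
    _ = _ := by ac_rfl

structure IsCommAssocFiltration (F : ℕ → Set L) : Prop where
  one_eq_univ : F 1 = Set.univ
  comm_mem {i p q : ℕ} : 1 ≤ p → 1 ≤ q → i ≤ p + q →
    ∀ {a b : L}, a ∈ F p → b ∈ F q → comm a b ∈ F i
  assoc_mem {i p q r : ℕ} : 1 ≤ p → 1 ≤ q → 1 ≤ r → i ≤ p + q + r →
    ∀ {a b c : L}, a ∈ F p → b ∈ F q → c ∈ F r → assoc a b c ∈ F i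

theorem Admissible.isCommAssocFiltration {M : ℕ → Set L} (hM : Admissible M) :
    IsCommAssocFiltration M where
  one_eq_univ := hM.2.1
  comm_mem hp hq hi _ _ ha hb := hM.2.2.1 _ _ _ hp hq hi _ ha _ hb
  assoc_mem hp hq hr hi _ _ _ ha hb hc := hM.2.2.2.1 _ _ _ _ hp hq hr hi _ ha _ hb _ hc

namespace IsCommAssocFiltration

variable {F : ℕ → Set L}

theorem image {β : Type*} [Loop β] (hF : IsCommAssocFiltration F) {φ : L → β}
    (hφ : IsLoopHom φ) (hsurj : Function.Surjective φ) :
    IsCommAssocFiltration fun i => φ '' F i where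
  one_eq_univ := by rw [hF.one_eq_univ, Set.image_univ_of_surjective hsurj]
  comm_mem := by
    rintro i p q hp hq hi _ _ ⟨a, ha, rfl⟩ ⟨b, hb, rfl⟩
    exact ⟨_, hF.comm_mem hp hq hi ha hb, hφ.map_comm_s15 a b⟩
  assoc_mem := by
    rintro i p q r hp hq hr hi _ _ _ ⟨a, ha, rfl⟩ ⟨b, hb, rfl⟩ ⟨c, hc, rfl⟩
    exact ⟨_, hF.assoc_mem hp hq hr hi ha hb hc, hφ.map_assoc_s15 a b c⟩

theorem mem_one (hF : IsCommAssocFiltration F) (x : L) : x ∈ F 1 :=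
  hF.one_eq_univ ▸ Set.mem_univ x

variable {n : ℕ}

theorem comm_eq_one (hF : IsCommAssocFiltration F) (h0 : ∀ u ∈ F (n + 1), u = 1)
    {s t : ℕ} (hs : 1 ≤ s) (ht : 1 ≤ t) (hst : n + 1 ≤ s + t) {u v : L} (hu : u ∈ F s)
    (hv : v ∈ F t) : comm u v = 1 :=
  h0 _ (hF.comm_mem hs ht hst hu hv)

theorem assoc_eq_one (hF : IsCommAssocFiltration F) (h0 : ∀ u ∈ F (n + 1), u = 1)
    {s t w : ℕ} (hs : 1 ≤ s) (ht : 1 ≤ t) (hw : 1 ≤ w) (hstw : n + 1 ≤ s + t + w)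
    {u v x : L} (hu : u ∈ F s) (hv : v ∈ F t) (hx : x ∈ F w) : assoc u v x = 1 :=
  h0 _ (hF.assoc_mem hs ht hw hstw hu hv hx)

theorem mem_center (hF : IsCommAssocFiltration F) (h0 : ∀ u ∈ F (n + 1), u = 1)
    {s : ℕ} (hs : 1 ≤ s) (hns : n ≤ s) {u : L} (hu : u ∈ F s) : u ∈ Set.center L :=
  mem_center_of_comm_eq_one u
    (fun x => hF.comm_eq_one h0 hs le_rfl (by omega) hu (hF.mem_one x))
    (fun x y => hF.assoc_eq_one h0 hs le_rfl le_rfl (by omega) hu (hF.mem_one x)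
      (hF.mem_one y))
    (fun x y => hF.assoc_eq_one h0 le_rfl le_rfl hs (by omega) (hF.mem_one x)
      (hF.mem_one y) hu)

theorem right_comm_mul_assoc (hF : IsCommAssocFiltration F) (h0 : ∀ u ∈ F (n + 1), u = 1)
    {s t w : ℕ} (hs : 1 ≤ s) (ht : 1 ≤ t) (hw : 1 ≤ w) (hn : n ≤ s + t + w) {x y z : L}
    (hx : x ∈ F s) (hy : y ∈ F t) (hz : z ∈ F w) :
    x * y * z * assoc x z y = x * z * y * comm y z * assoc x y z :=
  Loop.right_comm_mul_assoc x y z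
    (hF.assoc_eq_one h0 hs le_rfl (by omega) (by omega) hx (hF.mem_one _)
      (hF.comm_mem ht hw le_rfl hy hz))
    (hF.mem_center h0 (by omega) (by omega) (hF.assoc_mem hs hw ht le_rfl hx hz hy))

theorem left_comm_mul_comm (hF : IsCommAssocFiltration F) (h0 : ∀ u ∈ F (n + 1), u = 1)
    {s t w : ℕ} (hs : 1 ≤ s) (ht : 1 ≤ t) (hw : 1 ≤ w) (hn : n ≤ s + t + w) {x y z : L}
    (hx : x ∈ F s) (hy : y ∈ F t) (hz : z ∈ F w) :
    x * y * z = y * x * z * comm x y * comm (comm x y) z :=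
  have hxy := hF.comm_mem hs ht le_rfl hx hy
  Loop.left_comm_mul_comm x y z
    (hF.assoc_eq_one h0 le_rfl (by omega) hw (by omega) (hF.mem_one _) hxy hz)
    (hF.assoc_eq_one h0 le_rfl hw (by omega) (by omega) (hF.mem_one _) hz hxy)
    (hF.mem_center h0 (by omega) hn (hF.comm_mem (by omega) hw le_rfl hxy hz))

theorem mul_right_comm (hF : IsCommAssocFiltration F) (h0 : ∀ u ∈ F (n + 1), u = 1)
    {s t : ℕ} (hs : 1 ≤ s) (ht : 1 ≤ t) (hst : n + 1 ≤ s + t) {u v : L} (hu : u ∈ F s)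
    (hv : v ∈ F t) (x : L) : x * u * v = x * v * u :=
  mul_right_comm_of_comm_eq_one x (hF.comm_eq_one h0 hs ht hst hu hv)
    (hF.assoc_eq_one h0 le_rfl hs ht (by omega) (hF.mem_one x) hu hv)
    (hF.assoc_eq_one h0 le_rfl ht hs (by omega) (hF.mem_one x) hv hu)

theorem akivis (hF : IsCommAssocFiltration F) {p q r : ℕ} (hp : 1 ≤ p) (hq : 1 ≤ q)
    (hr : 1 ≤ r) (h0 : ∀ u ∈ F (p + q + r + 1), u = 1)
    {a b c : L} (ha : a ∈ F p) (hb : b ∈ F q) (hc : c ∈ F r) :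
    comm (comm a b) c * comm (comm b c) a * comm (comm c a) b *
        (assoc a c b * assoc c b a * assoc b a c) =
      assoc a b c * assoc b c a * assoc c a b := by
  have hab := hF.comm_mem hp hq le_rfl ha hb
  have hbc := hF.comm_mem hq hr le_rfl hb hc
  have hca := hF.comm_mem hr hp le_rfl hc ha
  have central {s : ℕ} {u : L} (hu : u ∈ F s) (hs : p + q + r ≤ s) : u ∈ Set.center L :=
    hF.mem_center h0 (by omega) hs hu
  exact congrArg Subtype.val <| akivis_of_relations
    (ζ₁ := ⟨_, central (hF.comm_mem (by omega) hr le_rfl hab hc) le_rfl⟩)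
    (ζ₂ := ⟨_, central (hF.comm_mem (by omega) hp le_rfl hbc ha) (by omega)⟩)
    (ζ₃ := ⟨_, central (hF.comm_mem (by omega) hq le_rfl hca hb) (by omega)⟩)
    (α_abc := ⟨_, central (hF.assoc_mem hp hq hr le_rfl ha hb hc) le_rfl⟩)
    (α_bca := ⟨_, central (hF.assoc_mem hq hr hp le_rfl hb hc ha) (by omega)⟩)
    (α_cab := ⟨_, central (hF.assoc_mem hr hp hq le_rfl hc ha hb) (by omega)⟩)
    (α_acb := ⟨_, central (hF.assoc_mem hp hr hq le_rfl ha hc hb) (by omega)⟩)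
    (α_cba := ⟨_, central (hF.assoc_mem hr hq hp le_rfl hc hb ha) (by omega)⟩)
    (α_bac := ⟨_, central (hF.assoc_mem hq hp hr le_rfl hb ha hc) (by omega)⟩)
    (hF.right_comm_mul_assoc h0 hp hq hr le_rfl ha hb hc)
    (hF.right_comm_mul_assoc h0 hq hr hp (by omega) hb hc ha)
    (hF.right_comm_mul_assoc h0 hr hp hq (by omega) hc ha hb)
    (hF.left_comm_mul_comm h0 hp hq hr le_rfl ha hb hc)
    (hF.left_comm_mul_comm h0 hq hr hp (by omega) hb hc ha)
    (hF.left_comm_mul_comm h0 hr hp hq (by omega) hc ha hb)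
    (hF.mul_right_comm h0 (by omega) (by omega) (by omega) hbc hca _)
    (hF.mul_right_comm h0 (by omega) (by omega) (by omega) hab hca _)
    (hF.mul_right_comm h0 (by omega) (by omega) (by omega) hbc hab _)

end IsCommAssocFiltration

theorem modEq_casub_of_forall {i : ℕ} {x y : L}
    (h : ∀ M : ℕ → Set L, Admissible M → ModEq (M i) x y) : ModEq (casub L i) x y := by
  rw [modEq_iff_ldiv_mem]
  rintro _ ⟨M, hM, rfl⟩
  exact modEq_iff_ldiv_mem.mp (h M hM)

theorem Admissible.mem_of_mem_casub {M : ℕ → Set L} (hM : Admissible M) {i : ℕ} {x : L}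
    (hx : x ∈ casub L i) : x ∈ M i :=
  hx _ ⟨M, hM, rfl⟩

end Loop

/-- the Akivis identity on the associated graded group: for
`a ∈ L_p`, `b ∈ L_q`, `c ∈ L_r`, writing the induced operations additively in
`L_{p+q+r}/L_{p+q+r+1}` amounts to the congruence
`[[a,b],c]·[[b,c],a]·[[c,a],b] · ((a,c,b)·(c,b,a)·(b,a,c))
  ≡ (a,b,c)·(b,c,a)·(c,a,b)  mod L_{p+q+r+1}`. -/
theorem akivis_identity {L : Type*} [Loop L] (p q r : ℕ)
    (hp : 1 ≤ p) (hq : 1 ≤ q) (hr : 1 ≤ r)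
    (a b c : L) (ha : a ∈ Loop.casub L p) (hb : b ∈ Loop.casub L q)
    (hc : c ∈ Loop.casub L r) :
    Loop.ModEq (Loop.casub L (p + q + r + 1))
      ((Loop.comm (Loop.comm a b) c * Loop.comm (Loop.comm b c) a *
          Loop.comm (Loop.comm c a) b) *
        (Loop.assoc a c b * Loop.assoc c b a * Loop.assoc b a c))
      (Loop.assoc a b c * Loop.assoc b c a * Loop.assoc c a b) := by
  refine Loop.modEq_casub_of_forall fun M hM => ?_
  have hN := hM.1 (p + q + r + 1)
  have hF := hM.isCommAssocFiltration.image hN.isLoopHom_mk Quotient.mk_surjective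
  exact Quotient.exact <| hF.akivis hp hq hr
    (by rintro _ ⟨n, hn, rfl⟩; exact hN.mk_eq_one hn)
    ⟨a, hM.mem_of_mem_casub ha, rfl⟩ ⟨b, hM.mem_of_mem_casub hb, rfl⟩
    ⟨c, hM.mem_of_mem_casub hc, rfl⟩
end

section
/- If L is a finitely generated loop, then for every i ≥ 1 the abelian group L_i/L_{i+1} of the commutator-associator filtration is finitely generated. -/
namespace CAProof
open Loop

variable {L : Type*} [Loop L]

/-! ### Basic loop lemmas -/

theorem mul_left_cancel' {a b c : L} (h : a * b = a * c) : b = c := by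
  have h1 := Loop.ldiv_mul a b
  rw [h, Loop.ldiv_mul] at h1
  exact h1.symm

theorem mul_right_cancel' {a b c : L} (h : b * a = c * a) : b = c := by
  have h1 := Loop.mul_rdiv b a
  rw [h, Loop.mul_rdiv] at h1
  exact h1.symm

theorem eq_ldiv_of_mul_eq {a x b : L} (h : a * x = b) : x = Loop.ldiv a b := by
  subst h; rw [Loop.ldiv_mul]

theorem eq_rdiv_of_mul_eq {a x b : L} (h : x * a = b) : x = Loop.rdiv b a := by
  subst h; rw [Loop.mul_rdiv]

theorem comm_eq (a b : L) : (b * a) * Loop.comm a b = a * b := Loop.mul_ldiv _ _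

theorem assoc_eq (a b c : L) : (a * (b * c)) * Loop.assoc a b c = (a * b) * c :=
  Loop.mul_ldiv _ _

/-! ### Closure -/

theorem mem_closure_iff {S : Set L} {x : L} :
    x ∈ closure S ↔ ∀ T : Set L, IsSubloop T → S ⊆ T → x ∈ T := by
  constructor
  · intro h T hT hST
    exact h T ⟨hT, hST⟩
  · intro h T hT
    exact h T hT.1 hT.2

theorem closure_isSubloop (S : Set L) : IsSubloop (closure S) := by
  refine ⟨?_, ?_⟩
  · intro T hT
    exact hT.1.1
  · intro a ha b hb
    refine ⟨?_, ?_, ?_⟩ <;> intro T hT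
    · exact (hT.1.2 a (ha T hT) b (hb T hT)).1
    · exact (hT.1.2 a (ha T hT) b (hb T hT)).2.1
    · exact (hT.1.2 a (ha T hT) b (hb T hT)).2.2

theorem subset_closure (S : Set L) : S ⊆ closure S := by
  intro x hx T hT
  exact hT.2 hx

theorem closure_subset {S T : Set L} (hT : IsSubloop T) (h : S ⊆ T) :
    closure S ⊆ T := by
  intro x hx
  exact hx T ⟨hT, h⟩

theorem closure_mono {S T : Set L} (h : S ⊆ T) : closure S ⊆ closure T :=
  closure_subset (closure_isSubloop T) (h.trans (subset_closure T))

/-! ### The trivial admissible family -/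

theorem isSubloop_univ : IsSubloop (Set.univ : Set L) :=
  ⟨trivial, fun _ _ _ _ => ⟨trivial, trivial, trivial⟩⟩

theorem isNormal_univ : IsNormal (Set.univ : Set L) := by
  refine ⟨isSubloop_univ, ?_, ?_, ?_⟩
  · intro x
    ext z
    constructor
    · rintro ⟨n, -, rfl⟩
      exact ⟨Loop.rdiv (x * n) x, trivial, (Loop.rdiv_mul _ _).symm⟩
    · rintro ⟨n, -, rfl⟩
      exact ⟨Loop.ldiv x (n * x), trivial, (Loop.mul_ldiv _ _).symm⟩
  · intro x y
    ext z
    constructor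
    · rintro ⟨n, -, rfl⟩
      exact ⟨Loop.rdiv ((n * x) * y) (x * y), trivial, (Loop.rdiv_mul _ _).symm⟩
    · rintro ⟨n, -, rfl⟩
      exact ⟨Loop.rdiv (Loop.rdiv (n * (x * y)) y) x, trivial, by
        rw [Loop.rdiv_mul, Loop.rdiv_mul]⟩
  · intro x y
    ext z
    constructor
    · rintro ⟨n, -, rfl⟩
      exact ⟨Loop.ldiv (y * x) (y * (x * n)), trivial, (Loop.mul_ldiv _ _).symm⟩
    · rintro ⟨n, -, rfl⟩
      exact ⟨Loop.ldiv x (Loop.ldiv y ((y * x) * n)), trivial, by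
        rw [Loop.mul_ldiv, Loop.mul_ldiv]⟩

theorem admissible_univ : Admissible (fun _ : ℕ => (Set.univ : Set L)) := by
  refine ⟨fun _ => isNormal_univ, rfl, ?_, ?_, ?_⟩ <;> intros <;> trivial

/-! ### Basic properties of `casub` -/

theorem mem_casub {x : L} {i : ℕ} :
    x ∈ casub L i ↔ ∀ M : ℕ → Set L, Admissible M → x ∈ M i := by
  constructor
  · intro h M hM
    exact h _ ⟨M, hM, rfl⟩
  · rintro h S ⟨M, hM, rfl⟩
    exact h M hM

theorem casub_one : casub L 1 = Set.univ := by
  apply Set.eq_univ_of_forall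
  intro x
  rw [mem_casub]
  intro M hM
  rw [hM.2.1]
  trivial

theorem mem_casub_one (x : L) : x ∈ casub L 1 := by rw [casub_one]; trivial

theorem casub_comm_mem {i p q : ℕ} (hp : 1 ≤ p) (hq : 1 ≤ q) (hpq : i ≤ p + q)
    {a b : L} (ha : a ∈ casub L p) (hb : b ∈ casub L q) :
    Loop.comm a b ∈ casub L i := by
  rw [mem_casub] at *
  intro M hM
  exact hM.2.2.1 i p q hp hq hpq a (ha M hM) b (hb M hM)

theorem casub_assoc_mem {i p q r : ℕ} (hp : 1 ≤ p) (hq : 1 ≤ q) (hr : 1 ≤ r)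
    (hpqr : i ≤ p + q + r) {a b c : L} (ha : a ∈ casub L p) (hb : b ∈ casub L q)
    (hc : c ∈ casub L r) : Loop.assoc a b c ∈ casub L i := by
  rw [mem_casub] at *
  intro M hM
  exact hM.2.2.2.1 i p q r hp hq hr hpqr a (ha M hM) b (hb M hM) c (hc M hM)

theorem casub_dev_mem {i : ℕ} {idx ps : List ℕ} {xs : List L} (hne : idx ≠ [])
    (hlen : ps.length = idx.length + 3) (hxlen : xs.length = idx.length + 3)
    (hbound : ∀ j < idx.length, 1 ≤ idx.getD j 0 ∧ idx.getD j 0 ≤ (idx.length - j) + 2)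
    (hmem : ∀ j < ps.length, 1 ≤ ps.getD j 0 ∧ xs.getD j 1 ∈ casub L (ps.getD j 0))
    (hsum : i ≤ ps.sum) : dev idx xs ∈ casub L i := by
  rw [mem_casub]
  intro M hM
  refine hM.2.2.2.2 i idx ps xs hne hlen hxlen hbound ?_ hsum
  intro j hj
  refine ⟨(hmem j hj).1, ?_⟩
  have := (hmem j hj).2
  rw [mem_casub] at this
  exact this M hM

theorem casub_normal (i : ℕ) : IsNormal (casub L i) := by
  have hsub : IsSubloop (casub L i) := by
    constructor
    · rw [mem_casub]
      intro M hM
      exact (hM.1 i).1.1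
    · intro a ha b hb
      rw [mem_casub] at ha hb
      refine ⟨?_, ?_, ?_⟩ <;> rw [mem_casub] <;> intro M hM
      · exact ((hM.1 i).1.2 a (ha M hM) b (hb M hM)).1
      · exact ((hM.1 i).1.2 a (ha M hM) b (hb M hM)).2.1
      · exact ((hM.1 i).1.2 a (ha M hM) b (hb M hM)).2.2
  refine ⟨hsub, ?_, ?_, ?_⟩
  · intro x
    ext z
    constructor
    · rintro ⟨n, hn, rfl⟩
      refine ⟨Loop.rdiv (x * n) x, ?_, (Loop.rdiv_mul _ _).symm⟩
      rw [mem_casub] at hn ⊢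
      intro M hM
      have h1 : x * n ∈ {z | ∃ m ∈ M i, z = x * m} := ⟨n, hn M hM, rfl⟩
      rw [(hM.1 i).2.1 x] at h1
      obtain ⟨m, hm, hmx⟩ := h1
      rwa [eq_rdiv_of_mul_eq hmx.symm] at hm
    · rintro ⟨n, hn, rfl⟩
      refine ⟨Loop.ldiv x (n * x), ?_, (Loop.mul_ldiv _ _).symm⟩
      rw [mem_casub] at hn ⊢
      intro M hM
      have h1 : n * x ∈ {z | ∃ m ∈ M i, z = m * x} := ⟨n, hn M hM, rfl⟩
      rw [← (hM.1 i).2.1 x] at h1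
      obtain ⟨m, hm, hmx⟩ := h1
      rwa [eq_ldiv_of_mul_eq hmx.symm] at hm
  · intro x y
    ext z
    constructor
    · rintro ⟨n, hn, rfl⟩
      refine ⟨Loop.rdiv ((n * x) * y) (x * y), ?_, (Loop.rdiv_mul _ _).symm⟩
      rw [mem_casub] at hn ⊢
      intro M hM
      have h1 : (n * x) * y ∈ {z | ∃ m ∈ M i, z = (m * x) * y} := ⟨n, hn M hM, rfl⟩
      rw [(hM.1 i).2.2.1 x y] at h1
      obtain ⟨m, hm, hmx⟩ := h1
      rwa [eq_rdiv_of_mul_eq hmx.symm] at hm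
    · rintro ⟨n, hn, rfl⟩
      refine ⟨Loop.rdiv (Loop.rdiv (n * (x * y)) y) x, ?_, by rw [Loop.rdiv_mul, Loop.rdiv_mul]⟩
      rw [mem_casub] at hn ⊢
      intro M hM
      have h1 : n * (x * y) ∈ {z | ∃ m ∈ M i, z = m * (x * y)} := ⟨n, hn M hM, rfl⟩
      rw [← (hM.1 i).2.2.1 x y] at h1
      obtain ⟨m, hm, hmx⟩ := h1
      have : m = Loop.rdiv (Loop.rdiv (n * (x * y)) y) x := by
        have h2 : (m * x) * y = n * (x * y) := hmx.symm
        have h3 : m * x = Loop.rdiv (n * (x * y)) y := eq_rdiv_of_mul_eq h2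
        exact eq_rdiv_of_mul_eq h3
      rwa [← this]
  · intro x y
    ext z
    constructor
    · rintro ⟨n, hn, rfl⟩
      refine ⟨Loop.ldiv (y * x) (y * (x * n)), ?_, (Loop.mul_ldiv _ _).symm⟩
      rw [mem_casub] at hn ⊢
      intro M hM
      have h1 : y * (x * n) ∈ {z | ∃ m ∈ M i, z = y * (x * m)} := ⟨n, hn M hM, rfl⟩
      rw [(hM.1 i).2.2.2 x y] at h1
      obtain ⟨m, hm, hmx⟩ := h1
      rwa [eq_ldiv_of_mul_eq hmx.symm] at hm
    · rintro ⟨n, hn, rfl⟩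
      refine ⟨Loop.ldiv x (Loop.ldiv y ((y * x) * n)), ?_, by rw [Loop.mul_ldiv, Loop.mul_ldiv]⟩
      rw [mem_casub] at hn ⊢
      intro M hM
      have h1 : (y * x) * n ∈ {z | ∃ m ∈ M i, z = (y * x) * m} := ⟨n, hn M hM, rfl⟩
      rw [← (hM.1 i).2.2.2 x y] at h1
      obtain ⟨m, hm, hmx⟩ := h1
      have : m = Loop.ldiv x (Loop.ldiv y ((y * x) * n)) := by
        have h2 : y * (x * m) = (y * x) * n := hmx.symm
        have h3 : x * m = Loop.ldiv y ((y * x) * n) := eq_ldiv_of_mul_eq h2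
        exact eq_ldiv_of_mul_eq h3
      rwa [← this]

theorem casub_isSubloop (i : ℕ) : IsSubloop (casub L i) := (casub_normal i).1

/-! ### Antitonicity of `casub` -/

theorem sum_map_min (l : List ℕ) (j : ℕ) :
    min l.sum j ≤ (l.map fun p => min p j).sum := by
  induction l with
  | nil => simp
  | cons p tl ih =>
    simp only [List.sum_cons, List.map_cons] at *
    omega

theorem cap_admissible {M : ℕ → Set L} (hM : Admissible M) {j : ℕ} (hj : 1 ≤ j) :
    Admissible (fun n => M (min n j)) := by
  obtain ⟨hnorm, hone, hcomm, hassoc, hdev⟩ := hM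
  refine ⟨fun n => hnorm _, ?_, ?_, ?_, ?_⟩
  · show M (min 1 j) = Set.univ
    have : min 1 j = 1 := by omega
    rw [this, hone]
  · intro i p q hp hq hpq a ha b hb
    exact hcomm (min i j) (min p j) (min q j) (by omega) (by omega) (by omega) a ha b hb
  · intro i p q r hp hq hr hpqr a ha b hb c hc
    exact hassoc (min i j) (min p j) (min q j) (min r j) (by omega) (by omega) (by omega)
      (by omega) a ha b hb c hc
  · intro i idx ps xs hne hlen hxlen hbound hmem hsum
    refine hdev (min i j) idx (ps.map fun p => min p j) xs hne (by simp [hlen]) hxlen hbound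
      ?_ ?_
    · intro k hk
      rw [List.length_map] at hk
      have h1 := hmem k (by simpa using hk)
      have h2 : (ps.map fun p => min p j).getD k 0 = min (ps.getD k 0) j := by
        rw [List.getD_eq_getElem _ _ (by simpa using hk), List.getD_eq_getElem _ _ hk,
          List.getElem_map]
      rw [h2]
      exact ⟨by omega, h1.2⟩
    · calc min i j ≤ min ps.sum j := by omega
        _ ≤ _ := sum_map_min ps j

theorem casub_anti {j k : ℕ} (hj : 1 ≤ j) (hjk : j ≤ k) :
    casub L k ⊆ casub L j := by
  intro x hx
  rw [mem_casub] at hx ⊢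
  intro M hM
  have h1 := hx _ (cap_admissible hM hj)
  simpa [Nat.min_eq_right hjk] using h1

end CAProof
namespace CAProof
open Loop

variable {L : Type*} [Loop L]

/-! ### Congruence modulo a normal subloop -/

section Cong

variable {K : Set L}

theorem normA (hK : IsNormal K) (x z : L) :
    (∃ n ∈ K, z = x * n) ↔ (∃ n ∈ K, z = n * x) := by
  have h := hK.2.1 x
  constructor
  · intro hz
    have : z ∈ {z | ∃ n ∈ K, z = x * n} := hz
    rwa [h] at this
  · intro hz
    have : z ∈ {z | ∃ n ∈ K, z = n * x} := hz
    rwa [← h] at this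

theorem normB (hK : IsNormal K) (x y z : L) :
    (∃ n ∈ K, z = (n * x) * y) ↔ (∃ n ∈ K, z = n * (x * y)) := by
  have h := hK.2.2.1 x y
  constructor
  · intro hz
    have : z ∈ {z | ∃ n ∈ K, z = (n * x) * y} := hz
    rwa [h] at this
  · intro hz
    have : z ∈ {z | ∃ n ∈ K, z = n * (x * y)} := hz
    rwa [← h] at this

theorem normC (hK : IsNormal K) (x y z : L) :
    (∃ n ∈ K, z = y * (x * n)) ↔ (∃ n ∈ K, z = (y * x) * n) := by
  have h := hK.2.2.2 x y
  constructor
  · intro hz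
    have : z ∈ {z | ∃ n ∈ K, z = y * (x * n)} := hz
    rwa [h] at this
  · intro hz
    have : z ∈ {z | ∃ n ∈ K, z = (y * x) * n} := hz
    rwa [← h] at this

theorem modeq_refl (hK : IsNormal K) (x : L) : ModEq K x x :=
  ⟨1, hK.1.1, (Loop.mul_one x).symm⟩

theorem modeq_of_mem (hK : IsNormal K) {k : L} (hk : k ∈ K) (y : L) :
    ModEq K (y * k) y := ⟨k, hk, rfl⟩

theorem mem_of_modeq (hK : IsNormal K) {x y : L} (h : ModEq K x y) (hy : y ∈ K) :
    x ∈ K := by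
  obtain ⟨k, hk, rfl⟩ := h
  exact (hK.1.2 y hy k hk).1

theorem modeq_symm (hK : IsNormal K) {x y : L} (h : ModEq K x y) : ModEq K y x := by
  obtain ⟨k, hk, rfl⟩ := h
  have h1 : Loop.ldiv k 1 ∈ K := (hK.1.2 k hk 1 hK.1.1).2.1
  have h2 : y = y * (k * Loop.ldiv k 1) := by rw [Loop.mul_ldiv, Loop.mul_one]
  have h3 : ∃ n ∈ K, y = y * (k * n) := ⟨Loop.ldiv k 1, h1, h2⟩
  rw [normC hK] at h3
  exact h3

theorem modeq_trans (hK : IsNormal K) {x y z : L} (h1 : ModEq K x y)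
    (h2 : ModEq K y z) : ModEq K x z := by
  obtain ⟨k, hk, rfl⟩ := h1
  obtain ⟨k', hk', rfl⟩ := h2
  have h3 : ∃ n ∈ K, (z * k') * k = (z * k') * n := ⟨k, hk, rfl⟩
  rw [← normC hK] at h3
  obtain ⟨n, hn, hn2⟩ := h3
  exact ⟨k' * n, (hK.1.2 k' hk' n hn).1, hn2⟩

theorem modeq_mul (hK : IsNormal K) {u u' v v' : L} (h1 : ModEq K u u')
    (h2 : ModEq K v v') : ModEq K (u * v) (u' * v') := by
  obtain ⟨k, hk, rfl⟩ := h1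
  obtain ⟨k1, hk1, rfl⟩ := h2
  obtain ⟨n2, hn2, e2⟩ := (normA hK u' (u' * k)).mp ⟨k, hk, rfl⟩
  obtain ⟨n3, hn3, e3⟩ := (normB hK u' (v' * k1) ((n2 * u') * (v' * k1))).mp ⟨n2, hn2, rfl⟩
  obtain ⟨n4, hn4, e4⟩ := (normC hK v' u' (u' * (v' * k1))).mp ⟨k1, hk1, rfl⟩
  obtain ⟨n5, hn5, e5⟩ := (normA hK ((u' * v') * n4) (n3 * ((u' * v') * n4))).mpr ⟨n3, hn3, rfl⟩
  obtain ⟨n6, hn6, e6⟩ := (normC hK n4 (u' * v') (((u' * v') * n4) * n5)).mpr ⟨n5, hn5, rfl⟩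
  refine ⟨n4 * n6, (hK.1.2 n4 hn4 n6 hn6).1, ?_⟩
  rw [e2, e3, e4, e5, e6]

theorem modeq_cancel_left (hK : IsNormal K) {u a b : L}
    (h : ModEq K (u * a) (u * b)) : ModEq K a b := by
  obtain ⟨k, hk, e⟩ := h
  obtain ⟨n, hn, e2⟩ := (normC hK b u ((u * b) * k)).mpr ⟨k, hk, rfl⟩
  rw [e2] at e
  exact ⟨n, hn, mul_left_cancel' e⟩

theorem modeq_cancel_right (hK : IsNormal K) {u a b : L}
    (h : ModEq K (a * u) (b * u)) : ModEq K a b := by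
  obtain ⟨k, hk, e⟩ := h
  obtain ⟨n2, hn2, e2⟩ := (normA hK (b * u) ((b * u) * k)).mp ⟨k, hk, rfl⟩
  obtain ⟨n3, hn3, e3⟩ := (normB hK b u (n2 * (b * u))).mpr ⟨n2, hn2, rfl⟩
  rw [e2, e3] at e
  have e4 : a = n3 * b := mul_right_cancel' e
  obtain ⟨n4, hn4, e5⟩ := (normA hK b (n3 * b)).mpr ⟨n3, hn3, rfl⟩
  rw [e5] at e4
  exact ⟨n4, hn4, e4⟩

theorem modeq_ldiv (hK : IsNormal K) {a a' b b' : L} (h1 : ModEq K a a')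
    (h2 : ModEq K b b') : ModEq K (Loop.ldiv a b) (Loop.ldiv a' b') := by
  have e1 : a * Loop.ldiv a b = b := Loop.mul_ldiv a b
  have e2 : a' * Loop.ldiv a' b' = b' := Loop.mul_ldiv a' b'
  have h3 : ModEq K (a * Loop.ldiv a b) (a' * Loop.ldiv a b) :=
    modeq_mul hK h1 (modeq_refl hK _)
  have h4 : ModEq K (a' * Loop.ldiv a b) b := modeq_trans hK (modeq_symm hK h3) (by rw [e1]; exact modeq_refl hK b)
  have h5 : ModEq K (a' * Loop.ldiv a b) (a' * Loop.ldiv a' b') := by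
    rw [e2]
    exact modeq_trans hK h4 h2
  exact modeq_cancel_left hK h5

theorem modeq_rdiv (hK : IsNormal K) {a a' b b' : L} (h1 : ModEq K a a')
    (h2 : ModEq K b b') : ModEq K (Loop.rdiv a b) (Loop.rdiv a' b') := by
  have e1 : Loop.rdiv a b * b = a := Loop.rdiv_mul a b
  have e2 : Loop.rdiv a' b' * b' = a' := Loop.rdiv_mul a' b'
  have h3 : ModEq K (Loop.rdiv a b * b) (Loop.rdiv a b * b') :=
    modeq_mul hK (modeq_refl hK _) h2
  have h4 : ModEq K (Loop.rdiv a b * b') a' := by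
    refine modeq_trans hK (modeq_symm hK h3) ?_
    rw [e1]; exact h1
  have h5 : ModEq K (Loop.rdiv a b * b') (Loop.rdiv a' b' * b') := by
    rw [e2]; exact h4
  exact modeq_cancel_right hK h5

/-- Rewriting a congruence into an exact coset representation. -/
theorem rw_left (hK : IsNormal K) {N : Set L} (hN : IsSubloop N) (hKN : K ⊆ N)
    {u w m : L} (hm : m ∈ N) (h : ModEq K u (m * w)) : ∃ m' ∈ N, u = m' * w := by
  obtain ⟨k, hk, e⟩ := h
  obtain ⟨n1, hn1, e1⟩ := (normA hK (m * w) ((m * w) * k)).mp ⟨k, hk, rfl⟩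
  obtain ⟨n2, hn2, e2⟩ := (normB hK m w (n1 * (m * w))).mpr ⟨n1, hn1, rfl⟩
  obtain ⟨n3, hn3, e3⟩ := (normA hK m (n2 * m)).mpr ⟨n2, hn2, rfl⟩
  refine ⟨m * n3, (hN.2 m hm n3 (hKN hn3)).1, ?_⟩
  rw [e, e1, e2, ← e3]

theorem rw_right (hK : IsNormal K) {N : Set L} (hN : IsSubloop N) (hKN : K ⊆ N)
    {u w m : L} (hm : m ∈ N) (h : ModEq K u (w * m)) : ∃ m' ∈ N, u = w * m' := by
  obtain ⟨k, hk, e⟩ := h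
  obtain ⟨n1, hn1, e1⟩ := (normC hK m w ((w * m) * k)).mpr ⟨k, hk, rfl⟩
  refine ⟨m * n1, (hN.2 m hm n1 (hKN hn1)).1, ?_⟩
  rw [e, e1]

theorem rw_bx (hK : IsNormal K) {N : Set L} (hN : IsSubloop N) (hKN : K ⊆ N)
    {u x y m : L} (hm : m ∈ N) (h : ModEq K u ((m * x) * y)) :
    ∃ m' ∈ N, u = (m' * x) * y := by
  obtain ⟨k, hk, e⟩ := h
  obtain ⟨n1, hn1, e1⟩ := (normA hK ((m * x) * y) (((m * x) * y) * k)).mp ⟨k, hk, rfl⟩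
  obtain ⟨n2, hn2, e2⟩ := (normB hK (m * x) y (n1 * ((m * x) * y))).mpr ⟨n1, hn1, rfl⟩
  obtain ⟨n3, hn3, e3⟩ := (normB hK m x (n2 * (m * x))).mpr ⟨n2, hn2, rfl⟩
  obtain ⟨n4, hn4, e4⟩ := (normA hK m (n3 * m)).mpr ⟨n3, hn3, rfl⟩
  refine ⟨m * n4, (hN.2 m hm n4 (hKN hn4)).1, ?_⟩
  rw [e, e1, e2, e3, ← e4]

theorem rw_cx (hK : IsNormal K) {N : Set L} (hN : IsSubloop N) (hKN : K ⊆ N)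
    {u x y m : L} (hm : m ∈ N) (h : ModEq K u (y * (x * m))) :
    ∃ m' ∈ N, u = y * (x * m') := by
  obtain ⟨k, hk, e⟩ := h
  obtain ⟨n1, hn1, e1⟩ := (normC hK (x * m) y ((y * (x * m)) * k)).mpr ⟨k, hk, rfl⟩
  obtain ⟨n2, hn2, e2⟩ := (normC hK m x ((x * m) * n1)).mpr ⟨n1, hn1, rfl⟩
  refine ⟨m * n2, (hN.2 m hm n2 (hKN hn2)).1, ?_⟩
  rw [e, e1, e2]

end Cong

end CAProof
namespace CAProof
open Loop

variable {L : Type*} [Loop L]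

/-! ### Expansion along a generated subloop -/

theorem expand {K N P G : Set L} (hK : IsNormal K) (hN : IsSubloop N) (hKN : K ⊆ N)
    (hP : IsSubloop P) (hGP : G ⊆ P) (f : L → L)
    (hf : ∀ x ∈ P, ∀ y ∈ P, ModEq K (f (x * y)) (f x * f y))
    (hgen : ∀ g ∈ G, f g ∈ N) : ∀ s ∈ closure G, f s ∈ N := by
  have hsat : ∀ {z w : L}, ModEq K z w → w ∈ N → z ∈ N := by
    rintro z w ⟨k, hk, rfl⟩ hw
    exact (hN.2 w hw k (hKN hk)).1
  have hUsub : IsSubloop {s | s ∈ P ∧ f s ∈ N} := by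
    constructor
    · refine ⟨hP.1, ?_⟩
      have h1 : ModEq K (f 1) (f 1 * f 1) := by
        have := hf 1 hP.1 1 hP.1
        rwa [Loop.mul_one] at this
      have h2 : ModEq K (f 1 * 1) (f 1 * f 1) := by rwa [Loop.mul_one]
      have h4 : ModEq K (f 1) 1 := modeq_symm hK (modeq_cancel_left hK h2)
      obtain ⟨k, hk, e⟩ := h4
      rw [e, Loop.one_mul]
      exact hKN hk
    · intro a ha b hb
      have hmul : a * b ∈ P := (hP.2 a ha.1 b hb.1).1
      have hld : Loop.ldiv a b ∈ P := (hP.2 a ha.1 b hb.1).2.1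
      have hrd : Loop.rdiv a b ∈ P := (hP.2 a ha.1 b hb.1).2.2
      refine ⟨⟨hmul, hsat (hf a ha.1 b hb.1) ((hN.2 _ ha.2 _ hb.2).1)⟩, ⟨hld, ?_⟩, ⟨hrd, ?_⟩⟩
      · have h1 : ModEq K (f b) (f a * f (Loop.ldiv a b)) := by
          have := hf a ha.1 _ hld
          rwa [Loop.mul_ldiv] at this
        have h2 : ModEq K (f a * Loop.ldiv (f a) (f b)) (f a * f (Loop.ldiv a b)) := by
          rw [Loop.mul_ldiv]
          exact h1
        exact hsat (modeq_symm hK (modeq_cancel_left hK h2))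
          ((hN.2 _ ha.2 _ hb.2).2.1)
      · have h1 : ModEq K (f a) (f (Loop.rdiv a b) * f b) := by
          have := hf _ hrd b hb.1
          rwa [Loop.rdiv_mul] at this
        have h2 : ModEq K (Loop.rdiv (f a) (f b) * f b) (f (Loop.rdiv a b) * f b) := by
          rw [Loop.rdiv_mul]
          exact h1
        exact hsat (modeq_symm hK (modeq_cancel_right hK h2))
          ((hN.2 _ ha.2 _ hb.2).2.2)
  intro s hs
  exact (closure_subset hUsub (fun g hg => ⟨hGP hg, hgen g hg⟩) hs).2

/-! ### Congruence facts from the filtration -/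

theorem modeq_swap {i p q : ℕ} (hp : 1 ≤ p) (hq : 1 ≤ q) (hsum : i + 1 ≤ p + q)
    {a b : L} (ha : a ∈ casub L p) (hb : b ∈ casub L q) :
    ModEq (casub L (i + 1)) (a * b) (b * a) :=
  ⟨Loop.comm a b, casub_comm_mem hp hq hsum ha hb, (comm_eq a b).symm⟩

theorem modeq_assoc3 {i p q r : ℕ} (hp : 1 ≤ p) (hq : 1 ≤ q) (hr : 1 ≤ r)
    (hsum : i + 1 ≤ p + q + r) {a b c : L} (ha : a ∈ casub L p) (hb : b ∈ casub L q)
    (hc : c ∈ casub L r) :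
    ModEq (casub L (i + 1)) ((a * b) * c) (a * (b * c)) :=
  ⟨Loop.assoc a b c, casub_assoc_mem hp hq hr hsum ha hb hc, (assoc_eq a b c).symm⟩

/-! ### Bilinearity of the commutator modulo the next term -/

theorem comm_left_lin {i p q : ℕ} (hp : 1 ≤ p) (hq : 1 ≤ q) (hi : p + q = i)
    {x y b : L} (hx : x ∈ casub L p) (hy : y ∈ casub L p) (hb : b ∈ casub L q) :
    ModEq (casub L (i + 1)) (Loop.comm (x * y) b)
      (Loop.comm x b * Loop.comm y b) := by
  have hK := casub_normal (L := L) (i + 1)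
  set cx := Loop.comm x b with hcxdef
  set cy := Loop.comm y b with hcydef
  have hone : ∀ z : L, z ∈ casub L 1 := mem_casub_one
  have hcx : cx ∈ casub L i := casub_comm_mem hp hq (le_of_eq hi.symm) hx hb
  have hcy : cy ∈ casub L i := casub_comm_mem hp hq (le_of_eq hi.symm) hy hb
  have hxy : x * y ∈ casub L p := ((casub_isSubloop p).2 x hx y hy).1
  have hi1 : 1 ≤ i := by omega
  -- chain : (x*y)*b ≈ (b*(x*y))*(cx*cy)
  have t1 : ModEq (casub L (i + 1)) ((x * y) * b) (x * (y * b)) :=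
    modeq_assoc3 hp hp hq (by omega) hx hy hb
  have t2 : x * (y * b) = x * ((b * y) * cy) := by rw [comm_eq]
  have t3 : ModEq (casub L (i + 1)) (x * ((b * y) * cy)) ((x * (b * y)) * cy) :=
    modeq_symm hK (modeq_assoc3 hp (le_refl 1) hi1 (by omega) hx (hone (b * y)) hcy)
  have t4 : ModEq (casub L (i + 1)) ((x * (b * y)) * cy) (((x * b) * y) * cy) :=
    modeq_mul hK (modeq_symm hK (modeq_assoc3 hp hq hp (by omega) hx hb hy))
      (modeq_refl hK cy)
  have t5 : ((x * b) * y) * cy = (((b * x) * cx) * y) * cy := by rw [comm_eq]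
  have t6 : ModEq (casub L (i + 1)) ((((b * x) * cx) * y) * cy)
      (((b * x) * (cx * y)) * cy) :=
    modeq_mul hK (modeq_assoc3 (le_refl 1) hi1 hp (by omega) (hone (b * x)) hcx hy)
      (modeq_refl hK cy)
  have t7 : ModEq (casub L (i + 1)) (((b * x) * (cx * y)) * cy)
      (((b * x) * (y * cx)) * cy) :=
    modeq_mul hK (modeq_mul hK (modeq_refl hK (b * x))
      (modeq_swap hi1 hp (by omega) hcx hy)) (modeq_refl hK cy)
  have t8 : ModEq (casub L (i + 1)) (((b * x) * (y * cx)) * cy)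
      ((((b * x) * y) * cx) * cy) :=
    modeq_mul hK (modeq_symm hK
      (modeq_assoc3 (le_refl 1) hp hi1 (by omega) (hone (b * x)) hy hcx))
      (modeq_refl hK cy)
  have t9 : ModEq (casub L (i + 1)) ((((b * x) * y) * cx) * cy)
      (((b * x) * y) * (cx * cy)) :=
    modeq_assoc3 (le_refl 1) hi1 hi1 (by omega) (hone ((b * x) * y)) hcx hcy
  have t10 : ModEq (casub L (i + 1)) (((b * x) * y) * (cx * cy))
      ((b * (x * y)) * (cx * cy)) :=
    modeq_mul hK (modeq_assoc3 hq hp hp (by omega) hb hx hy)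
      (modeq_refl hK (cx * cy))
  have chain : ModEq (casub L (i + 1)) ((x * y) * b) ((b * (x * y)) * (cx * cy)) := by
    refine modeq_trans hK t1 ?_
    rw [t2]
    refine modeq_trans hK t3 (modeq_trans hK t4 ?_)
    rw [t5]
    exact modeq_trans hK t6 (modeq_trans hK t7 (modeq_trans hK t8
      (modeq_trans hK t9 t10)))
  have hfin : ModEq (casub L (i + 1)) ((b * (x * y)) * Loop.comm (x * y) b)
      ((b * (x * y)) * (cx * cy)) := by
    rw [comm_eq]
    exact chain
  exact modeq_cancel_left hK hfin

theorem comm_right_lin {i p q : ℕ} (hp : 1 ≤ p) (hq : 1 ≤ q) (hi : p + q = i)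
    {a u v : L} (ha : a ∈ casub L p) (hu : u ∈ casub L q) (hv : v ∈ casub L q) :
    ModEq (casub L (i + 1)) (Loop.comm a (u * v))
      (Loop.comm a u * Loop.comm a v) := by
  have hK := casub_normal (L := L) (i + 1)
  set ca := Loop.comm a u with hcadef
  set cb := Loop.comm a v with hcbdef
  have hone : ∀ z : L, z ∈ casub L 1 := mem_casub_one
  have hca : ca ∈ casub L i := casub_comm_mem hp hq (le_of_eq hi.symm) ha hu
  have hcb : cb ∈ casub L i := casub_comm_mem hp hq (le_of_eq hi.symm) ha hv
  have huv : u * v ∈ casub L q := ((casub_isSubloop q).2 u hu v hv).1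
  have hi1 : 1 ≤ i := by omega
  -- chain : a*(u*v) ≈ ((u*v)*a)*(ca*cb)
  have t1 : ModEq (casub L (i + 1)) (a * (u * v)) ((a * u) * v) :=
    modeq_symm hK (modeq_assoc3 hp hq hq (by omega) ha hu hv)
  have t2 : (a * u) * v = ((u * a) * ca) * v := by rw [comm_eq]
  have t3 : ModEq (casub L (i + 1)) (((u * a) * ca) * v) ((u * a) * (ca * v)) :=
    modeq_assoc3 (le_refl 1) hi1 hq (by omega) (hone (u * a)) hca hv
  have t4 : ModEq (casub L (i + 1)) ((u * a) * (ca * v)) ((u * a) * (v * ca)) :=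
    modeq_mul hK (modeq_refl hK (u * a)) (modeq_swap hi1 hq (by omega) hca hv)
  have t5 : ModEq (casub L (i + 1)) ((u * a) * (v * ca)) (((u * a) * v) * ca) :=
    modeq_symm hK
      (modeq_assoc3 (le_refl 1) hq hi1 (by omega) (hone (u * a)) hv hca)
  have t6 : ModEq (casub L (i + 1)) (((u * a) * v) * ca) ((u * (a * v)) * ca) :=
    modeq_mul hK (modeq_assoc3 hq hp hq (by omega) hu ha hv) (modeq_refl hK ca)
  have t7 : (u * (a * v)) * ca = (u * ((v * a) * cb)) * ca := by rw [comm_eq]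
  have t8 : ModEq (casub L (i + 1)) ((u * ((v * a) * cb)) * ca)
      (((u * (v * a)) * cb) * ca) :=
    modeq_mul hK (modeq_symm hK
      (modeq_assoc3 hq (le_refl 1) hi1 (by omega) hu (hone (v * a)) hcb))
      (modeq_refl hK ca)
  have t9 : ModEq (casub L (i + 1)) (((u * (v * a)) * cb) * ca)
      ((((u * v) * a) * cb) * ca) :=
    modeq_mul hK (modeq_mul hK (modeq_symm hK
      (modeq_assoc3 hq hq hp (by omega) hu hv ha)) (modeq_refl hK cb))
      (modeq_refl hK ca)
  have t10 : ModEq (casub L (i + 1)) ((((u * v) * a) * cb) * ca)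
      (((u * v) * a) * (cb * ca)) :=
    modeq_assoc3 (le_refl 1) hi1 hi1 (by omega) (hone ((u * v) * a)) hcb hca
  have t11 : ModEq (casub L (i + 1)) (((u * v) * a) * (cb * ca))
      (((u * v) * a) * (ca * cb)) :=
    modeq_mul hK (modeq_refl hK ((u * v) * a)) (modeq_swap hi1 hi1 (by omega) hcb hca)
  have chain : ModEq (casub L (i + 1)) (a * (u * v)) (((u * v) * a) * (ca * cb)) := by
    refine modeq_trans hK t1 ?_
    rw [t2]
    refine modeq_trans hK t3 (modeq_trans hK t4 (modeq_trans hK t5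
      (modeq_trans hK t6 ?_)))
    rw [t7]
    exact modeq_trans hK t8 (modeq_trans hK t9 (modeq_trans hK t10 t11))
  have hfin : ModEq (casub L (i + 1)) (((u * v) * a) * Loop.comm a (u * v))
      (((u * v) * a) * (ca * cb)) := by
    rw [comm_eq]
    exact chain
  exact modeq_cancel_left hK hfin

end CAProof
namespace CAProof
open Loop

variable {L : Type*} [Loop L]

/-! ### List helpers -/

theorem getD_splice {α : Type*} (l : List α) (m : ℕ) (hm : m < l.length)
    (u v d : α) (j : ℕ) :
    (l.take m ++ u :: v :: l.drop (m + 1)).getD j d =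
      if j < m then l.getD j d
      else if j = m then u
      else if j = m + 1 then v
      else l.getD (j - 1) d := by
  have hlen : (l.take m).length = m := by rw [List.length_take]; omega
  by_cases h1 : j < m
  · rw [List.getD_append _ _ _ _ (by omega), if_pos h1]
    rw [List.getD_eq_getElem _ _ (by omega), List.getD_eq_getElem _ _ (by omega)]
    exact List.getElem_take
  · rw [List.getD_append_right _ _ _ _ (by omega), hlen, if_neg h1]
    by_cases h2 : j = m
    · subst h2
      simp
    · by_cases h3 : j = m + 1
      · subst h3
        have hh : m + 1 - m = 1 := by omega
        rw [hh, if_neg h2, if_pos rfl]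
        rfl
      · rw [if_neg h2, if_neg h3]
        have h4 : j - m = (j - m - 2) + 1 + 1 := by omega
        rw [h4, List.getD_cons_succ, List.getD_cons_succ]
        by_cases h5 : j - 1 < l.length
        · rw [List.getD_eq_getElem _ _ (by rw [List.length_drop]; omega),
            List.getD_eq_getElem _ _ h5, List.getElem_drop]
          congr 1
          omega
        · rw [List.getD_eq_default _ _ (by rw [List.length_drop]; omega),
            List.getD_eq_default _ _ (by omega)]

theorem length_splice {α : Type*} (l : List α) (m : ℕ) (hm : m < l.length) (u v : α) :
    (l.take m ++ u :: v :: l.drop (m + 1)).length = l.length + 1 := by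
  rw [List.length_append, List.length_take, List.length_cons, List.length_cons,
    List.length_drop]
  omega

theorem sum_splice (ps : List ℕ) (m : ℕ) (hm : m < ps.length) (a b : ℕ) :
    (ps.take m ++ a :: b :: ps.drop (m + 1)).sum + ps.getD m 0 = ps.sum + a + b := by
  have h1 := List.sum_take_add_sum_drop ps m
  rw [List.drop_eq_getElem_cons hm, List.sum_cons] at h1
  rw [List.sum_append, List.sum_cons, List.sum_cons, List.getD_eq_getElem _ _ hm]
  omega

theorem sum_set' (ps : List ℕ) (m : ℕ) (hm : m < ps.length) (v : ℕ) :
    (ps.set m v).sum + ps.getD m 0 = ps.sum + v := by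
  rw [List.set_eq_take_cons_drop _ hm]
  have h1 := List.sum_take_add_sum_drop ps m
  rw [List.drop_eq_getElem_cons hm, List.sum_cons] at h1
  rw [List.sum_append, List.sum_cons, List.getD_eq_getElem _ _ hm]
  omega

theorem getD_set' {α : Type*} (l : List α) (m j : ℕ) (v d : α) (hj : j < l.length) :
    (l.set m v).getD j d = if m = j then v else l.getD j d := by
  rw [List.getD_eq_getElem _ _ (by rw [List.length_set]; omega),
    List.getElem_set]
  split_ifs with h
  · rfl
  · rw [List.getD_eq_getElem _ _ hj]

theorem set_getD_self {α : Type*} (l : List α) (m : ℕ) (hm : m < l.length) (d : α) :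
    l.set m (l.getD m d) = l := by
  rw [List.getD_eq_getElem _ _ hm, List.set_eq_take_cons_drop _ hm,
    ← List.drop_eq_getElem_cons hm, List.take_append_drop]

theorem pos_entries {ps : List ℕ} (h : ∀ j < ps.length, 1 ≤ ps.getD j 0) :
    ∀ x ∈ ps, 1 ≤ x := by
  intro x hx
  obtain ⟨n, hn, rfl⟩ := List.mem_iff_getElem.mp hx
  have := h n hn
  rwa [List.getD_eq_getElem _ _ hn] at this

theorem length_le_sum {l : List ℕ} (h : ∀ x ∈ l, 1 ≤ x) : l.length ≤ l.sum := by
  induction l with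
  | nil => simp
  | cons a t ih =>
    simp only [List.length_cons, List.sum_cons]
    have h2 := ih (fun x hx => h x (List.mem_cons_of_mem a hx))
    have h3 := h a List.mem_cons_self
    omega

theorem getD_add_le_sum {ps : List ℕ} (hpos : ∀ x ∈ ps, 1 ≤ x) {j : ℕ}
    (hj : j < ps.length) : ps.getD j 0 + (ps.length - 1) ≤ ps.sum := by
  have h1 := List.sum_take_add_sum_drop ps j
  rw [List.drop_eq_getElem_cons hj, List.sum_cons] at h1
  have h2 : (ps.take j).length ≤ (ps.take j).sum :=
    length_le_sum (fun x hx => hpos x (List.take_subset _ _ hx))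
  have h3 : (ps.drop (j+1)).length ≤ (ps.drop (j+1)).sum :=
    length_le_sum (fun x hx => hpos x (List.drop_subset _ _ hx))
  rw [List.length_take] at h2
  rw [List.length_drop] at h3
  rw [List.getD_eq_getElem _ _ hj]
  omega

/-! ### The exact expansion identity for deviations -/

theorem dev_cons_eq (k : ℕ) (rest : List ℕ) (args : List L) :
    dev (k :: rest) args =
      Loop.ldiv
        (dev rest (args.take (k - 1) ++ args.getD (k - 1) 1 :: args.drop (k + 1)) *
          dev rest (args.take (k - 1) ++ args.getD k 1 :: args.drop (k + 1)))
        (dev rest (args.take (k - 1) ++ (args.getD (k - 1) 1 * args.getD k 1) :: args.drop (k + 1))) :=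
  rfl

theorem dev_expand (idx : List ℕ) (xs : List L) (m : ℕ) (hm : m < xs.length) (x y : L) :
    dev idx (xs.set m (x * y)) =
      (dev idx (xs.set m x) * dev idx (xs.set m y)) *
        dev ((m + 1) :: idx) (xs.take m ++ x :: y :: xs.drop (m + 1)) := by
  have hlen : (xs.take m).length = m := by rw [List.length_take]; omega
  have h1 : (xs.take m ++ x :: y :: xs.drop (m + 1)).take ((m + 1) - 1) = xs.take m := by
    rw [Nat.add_sub_cancel]
    exact List.take_left' hlen
  have h2 : (xs.take m ++ x :: y :: xs.drop (m + 1)).drop ((m + 1) + 1) = xs.drop (m + 1) := by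
    have : (xs.take m ++ x :: y :: xs.drop (m + 1)) = (xs.take m ++ [x, y]) ++ xs.drop (m+1) := by
      simp
    rw [this]
    refine List.drop_left' ?_
    rw [List.length_append, hlen]
    rfl
  have h3 : (xs.take m ++ x :: y :: xs.drop (m + 1)).getD ((m + 1) - 1) 1 = x := by
    rw [Nat.add_sub_cancel, List.getD_append_right _ _ _ _ (by omega), hlen,
      Nat.sub_self, List.getD_cons_zero]
  have h4 : (xs.take m ++ x :: y :: xs.drop (m + 1)).getD (m + 1) 1 = y := by
    rw [List.getD_append_right _ _ _ _ (by omega), hlen]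
    have : m + 1 - m = 1 := by omega
    rw [this]
    rfl
  rw [dev_cons_eq, h1, h2, h3, h4]
  rw [← List.set_eq_take_cons_drop x hm, ← List.set_eq_take_cons_drop y hm,
    ← List.set_eq_take_cons_drop (x * y) hm]
  rw [Loop.mul_ldiv]

/-! ### Deviation membership including the associator case -/

theorem dev_mem_casub_any {i : ℕ} {idx ps : List ℕ} {xs : List L}
    (hlen : ps.length = idx.length + 3) (hxlen : xs.length = idx.length + 3)
    (hbound : ∀ j < idx.length, 1 ≤ idx.getD j 0 ∧ idx.getD j 0 ≤ (idx.length - j) + 2)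
    (hmem : ∀ j < ps.length, 1 ≤ ps.getD j 0 ∧ xs.getD j 1 ∈ casub L (ps.getD j 0))
    (hsum : i ≤ ps.sum) : dev idx xs ∈ casub L i := by
  rcases idx with _ | ⟨k, rest⟩
  · -- associator case
    simp only [List.length_nil, Nat.zero_add] at hlen hxlen
    obtain ⟨a, b, c, rfl⟩ := List.length_eq_three.mp hxlen
    obtain ⟨p1, p2, p3, rfl⟩ := List.length_eq_three.mp hlen
    have m0 := hmem 0 (by simp)
    have m1 := hmem 1 (by simp)
    have m2 := hmem 2 (by simp)
    simp only [List.getD_cons_zero, List.getD_cons_succ] at m0 m1 m2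
    have hs : [p1, p2, p3].sum = p1 + p2 + p3 := by simp [List.sum_cons]; ring
    rw [hs] at hsum
    show Loop.assoc a b c ∈ casub L i
    exact casub_assoc_mem m0.1 m1.1 m2.1 hsum m0.2 m1.2 m2.2
  · exact casub_dev_mem (by simp) hlen hxlen hbound hmem hsum

end CAProof
namespace CAProof
open Loop

variable {L : Type*} [Loop L]

section Machines

variable {i : ℕ} {N : Set L} {Tset : ℕ → Finset L}

/-! ### Expanding commutators of weight exactly `i` -/

theorem comm_machine (hN : IsSubloop N) (hKN : casub L (i + 1) ⊆ N)
    (hTC : ∀ q, 1 ≤ q → q < i → (Tset q : Set L) ⊆ casub L q)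
    (hCT : ∀ q, 1 ≤ q → q < i → casub L q ⊆ closure ((Tset q : Set L) ∪ casub L (q + 1)))
    (hbase : ∀ p q, 1 ≤ p → p < i → 1 ≤ q → q < i → p + q = i →
      ∀ t ∈ (Tset p : Set L), ∀ u ∈ (Tset q : Set L), Loop.comm t u ∈ N) :
    ∀ p q, 1 ≤ p → 1 ≤ q → p + q = i →
      ∀ a ∈ casub L p, ∀ b ∈ casub L q, Loop.comm a b ∈ N := by
  intro p q hp hq hpq a ha b hb
  have hpi : p < i := by omega
  have hqi : q < i := by omega
  have hGP_q : ((Tset q : Set L) ∪ casub L (q + 1)) ⊆ casub L q := by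
    apply Set.union_subset (hTC q hq hqi)
    exact casub_anti hq (by omega)
  have hGP_p : ((Tset p : Set L) ∪ casub L (p + 1)) ⊆ casub L p := by
    apply Set.union_subset (hTC p hp hpi)
    exact casub_anti hp (by omega)
  have step1 : ∀ g ∈ ((Tset p : Set L) ∪ casub L (p + 1)), ∀ b' ∈ casub L q,
      Loop.comm g b' ∈ N := by
    intro g hg b' hb'
    rcases hg with hgT | hgC
    · refine expand (casub_normal (i + 1)) hN hKN (casub_isSubloop q) hGP_q
        (fun z => Loop.comm g z) ?_ ?_ b' (hCT q hq hqi hb')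
      · intro x hx y hy
        exact comm_right_lin hp hq hpq (hTC p hp hpi hgT) hx hy
      · intro u hu
        rcases hu with huT | huC
        · exact hbase p q hp hpi hq hqi hpq g hgT u huT
        · exact hKN (casub_comm_mem hp (by omega) (by omega) (hTC p hp hpi hgT) huC)
    · exact hKN (casub_comm_mem (by omega) hq (by omega) hgC hb')
  refine expand (casub_normal (i + 1)) hN hKN (casub_isSubloop p) hGP_p
    (fun z => Loop.comm z b) ?_ ?_ a (hCT p hp hpi ha)
  · intro x hx y hy
    exact comm_left_lin hp hq hpq hx hy hb
  · intro g hg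
    exact step1 g hg b hb

/-! ### Expanding deviations (and associators) of weight exactly `i` -/

theorem dev_machine (hN : IsSubloop N) (hKN : casub L (i + 1) ⊆ N)
    (hTC : ∀ q, 1 ≤ q → q < i → (Tset q : Set L) ⊆ casub L q)
    (hCT : ∀ q, 1 ≤ q → q < i → casub L q ⊆ closure ((Tset q : Set L) ∪ casub L (q + 1)))
    (hbase : ∀ (idx ps : List ℕ) (xs : List L),
      ps.length = idx.length + 3 → xs.length = idx.length + 3 →
      (∀ j < idx.length, 1 ≤ idx.getD j 0 ∧ idx.getD j 0 ≤ (idx.length - j) + 2) →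
      (∀ j < ps.length, 1 ≤ ps.getD j 0 ∧ ps.getD j 0 < i ∧
        xs.getD j 1 ∈ (Tset (ps.getD j 0) : Set L)) →
      ps.sum = i → dev idx xs ∈ N) :
    ∀ (idx ps : List ℕ) (xs : List L),
      ps.length = idx.length + 3 → xs.length = idx.length + 3 →
      (∀ j < idx.length, 1 ≤ idx.getD j 0 ∧ idx.getD j 0 ≤ (idx.length - j) + 2) →
      (∀ j < ps.length, 1 ≤ ps.getD j 0 ∧ xs.getD j 1 ∈ casub L (ps.getD j 0)) →
      ps.sum = i → dev idx xs ∈ N := by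
  intro idx ps xs hlen hxlen hbound hmem hsum
  have hpos : ∀ x ∈ ps, 1 ≤ x := pos_entries (fun j hj => (hmem j hj).1)
  have hplen : ps.length ≤ i := by
    have := length_le_sum hpos
    omega
  have hpi : ∀ j, j < ps.length → ps.getD j 0 < i := by
    intro j hj
    have := getD_add_le_sum hpos hj
    omega
  -- downward induction over slots
  have main : ∀ d m, m + d = idx.length + 3 → ∀ xs' : List L,
      xs'.length = idx.length + 3 →
      (∀ j < ps.length, xs'.getD j 1 ∈ casub L (ps.getD j 0)) →
      (∀ j < ps.length, j < m → xs'.getD j 1 ∈ (Tset (ps.getD j 0) : Set L)) →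
      dev idx xs' ∈ N := by
    intro d
    induction d with
    | zero =>
      intro m hm xs' hxlen' hmem' hT'
      refine hbase idx ps xs' hlen hxlen' hbound ?_ hsum
      intro j hj
      exact ⟨(hmem j hj).1, hpi j hj, hT' j hj (by omega)⟩
    | succ d ih =>
      intro m hm xs' hxlen' hmem' hT'
      have hmlt : m < ps.length := by omega
      have hmlt' : m < xs'.length := by omega
      set pm := ps.getD m 0 with hpmdef
      have hpm1 : 1 ≤ pm := (hmem m hmlt).1
      have hpmi : pm < i := hpi m hmlt
      have hGP : ((Tset pm : Set L) ∪ casub L (pm + 1)) ⊆ casub L pm := by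
        apply Set.union_subset (hTC pm hpm1 hpmi)
        exact casub_anti hpm1 (by omega)
      have key : ∀ s ∈ closure ((Tset pm : Set L) ∪ casub L (pm + 1)),
          dev idx (xs'.set m s) ∈ N := by
        refine expand (casub_normal (i + 1)) hN hKN (casub_isSubloop pm) hGP
          (fun z => dev idx (xs'.set m z)) ?_ ?_
        · -- multiplicativity modulo casub (i+1)
          intro x hx y hy
          refine ⟨dev ((m + 1) :: idx) (xs'.take m ++ x :: y :: xs'.drop (m + 1)),
            ?_, dev_expand idx xs' m hmlt' x y⟩
          refine casub_dev_mem (by simp)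
            (ps := ps.take m ++ pm :: pm :: ps.drop (m + 1)) ?_ ?_ ?_ ?_ ?_
          · rw [length_splice _ _ hmlt]
            simp [hlen]
          · rw [length_splice _ _ hmlt']
            simp [hxlen']
          · intro j hj
            simp only [List.length_cons] at hj
            cases j with
            | zero =>
              simp only [List.getD_cons_zero, List.length_cons]
              constructor
              · omega
              · have : m < ps.length := hmlt
                omega
            | succ j' =>
              simp only [List.getD_cons_succ, List.length_cons]
              have hb := hbound j' (by omega)
              exact ⟨hb.1, by omega⟩
          · intro j hj
            rw [length_splice _ _ hmlt] at hj
            rw [getD_splice ps m hmlt pm pm 0 j, getD_splice xs' m hmlt' x y 1 j]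
            split_ifs with h1 h2 h3
            · exact ⟨(hmem j (by omega)).1, hmem' j (by omega)⟩
            · exact ⟨hpm1, hx⟩
            · exact ⟨hpm1, hy⟩
            · exact ⟨(hmem (j - 1) (by omega)).1, hmem' (j - 1) (by omega)⟩
          · have hsp := sum_splice ps m hmlt pm pm
            omega
        · -- generators
          intro g hg
          rcases hg with hgT | hgC
          · refine ih (m + 1) (by omega) (xs'.set m g) (by rw [List.length_set]; exact hxlen')
              ?_ ?_
            · intro j hj
              rw [getD_set' _ _ _ _ _ (by omega)]
              split_ifs with h
              · subst h
                exact hTC pm hpm1 hpmi hgT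
              · exact hmem' j hj
            · intro j hj hjm
              rw [getD_set' _ _ _ _ _ (by omega)]
              split_ifs with h
              · subst h
                exact hgT
              · exact hT' j hj (by omega)
          · -- some slot lands in the next filtration step
            refine hKN (dev_mem_casub_any (ps := ps.set m (pm + 1))
              (by rw [List.length_set]; exact hlen)
              (by rw [List.length_set]; exact hxlen') hbound ?_ ?_)
            · intro j hj
              rw [List.length_set] at hj
              rw [getD_set' _ _ _ _ _ hj, getD_set' _ _ _ _ _ (by omega)]
              split_ifs with h
              · subst h
                exact ⟨by omega, hgC⟩
              · exact ⟨(hmem j hj).1, hmem' j hj⟩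
            · have := sum_set' ps m hmlt (pm + 1)
              omega
      have := key (xs'.getD m 1) (hCT pm hpm1 hpmi (hmem' m hmlt))
      rwa [set_getD_self _ _ hmlt'] at this
  exact main (idx.length + 3) 0 (by omega) xs hxlen (fun j hj => (hmem j hj).2)
    (fun j hj h0 => absurd h0 (by omega))

end Machines

end CAProof
namespace CAProof
open Loop

variable {L : Type*} [Loop L]

/-! ### Normality of an intermediate subloop -/

theorem normal_of_central {i : ℕ} {N : Set L} (hN : IsSubloop N)
    (hKN : casub L (i + 1) ⊆ N) (hNC : N ⊆ casub L i) (hi : 1 ≤ i) :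
    IsNormal N := by
  have hK := casub_normal (L := L) (i + 1)
  have hone : ∀ z : L, z ∈ casub L 1 := mem_casub_one
  have hcomm : ∀ (x : L) {n : L}, n ∈ N → ModEq (casub L (i + 1)) (x * n) (n * x) := by
    intro x n hn
    exact ⟨Loop.comm x n, casub_comm_mem (le_refl 1) hi (by omega) (hone x) (hNC hn),
      (comm_eq x n).symm⟩
  have hassocB : ∀ (x y : L) {n : L}, n ∈ N →
      ModEq (casub L (i + 1)) ((n * x) * y) (n * (x * y)) := by
    intro x y n hn
    exact ⟨Loop.assoc n x y, casub_assoc_mem hi (le_refl 1) (le_refl 1) (by omega)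
      (hNC hn) (hone x) (hone y), (assoc_eq n x y).symm⟩
  have hassocC : ∀ (x y : L) {n : L}, n ∈ N →
      ModEq (casub L (i + 1)) ((y * x) * n) (y * (x * n)) := by
    intro x y n hn
    exact ⟨Loop.assoc y x n, casub_assoc_mem (le_refl 1) (le_refl 1) hi (by omega)
      (hone y) (hone x) (hNC hn), (assoc_eq y x n).symm⟩
  refine ⟨hN, ?_, ?_, ?_⟩
  · intro x
    ext z
    constructor
    · rintro ⟨n, hn, rfl⟩
      exact rw_left hK hN hKN hn (hcomm x hn)
    · rintro ⟨n, hn, rfl⟩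
      exact rw_right hK hN hKN hn (modeq_symm hK (hcomm x hn))
  · intro x y
    ext z
    constructor
    · rintro ⟨n, hn, rfl⟩
      exact rw_left hK hN hKN hn (hassocB x y hn)
    · rintro ⟨n, hn, rfl⟩
      exact rw_bx hK hN hKN hn (modeq_symm hK (hassocB x y hn))
  · intro x y
    ext z
    constructor
    · rintro ⟨n, hn, rfl⟩
      exact rw_right hK hN hKN hn (modeq_symm hK (hassocC x y hn))
    · rintro ⟨n, hn, rfl⟩
      exact rw_cx hK hN hKN hn (hassocC x y hn)

/-! ### Finiteness of bounded lists -/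

theorem finite_lists {β : Type*} (n : ℕ) (V : Set β) (hV : V.Finite) :
    {l : List β | l.length ≤ n ∧ ∀ a ∈ l, a ∈ V}.Finite := by
  induction n with
  | zero =>
    refine Set.Finite.subset (Set.finite_singleton []) ?_
    rintro l ⟨hl, -⟩
    rw [Set.mem_singleton_iff]
    exact List.length_eq_zero_iff.mp (by omega)
  | succ n ih =>
    refine Set.Finite.subset (Set.Finite.insert [] (Set.Finite.image2 List.cons hV ih)) ?_
    rintro l ⟨hl, hmem⟩
    cases l with
    | nil => exact Set.mem_insert _ _
    | cons a t =>
      refine Set.mem_insert_of_mem _ ?_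
      refine Set.mem_image2_of_mem (hmem a List.mem_cons_self) ?_
      refine ⟨?_, fun x hx => hmem x (List.mem_cons_of_mem a hx)⟩
      have := hl
      simp only [List.length_cons] at this
      omega

/-! ### Main theorem -/

theorem main_fg (hfg : ∃ S : Finset L, Loop.closure (S : Set L) = Set.univ) :
    ∀ i : ℕ, 1 ≤ i →
      ∃ T : Finset L, (T : Set L) ⊆ Loop.casub L i ∧
        Loop.casub L i ⊆ Loop.closure ((T : Set L) ∪ Loop.casub L (i + 1)) := by
  obtain ⟨S, hS⟩ := hfg
  intro i
  induction i using Nat.strong_induction_on with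
  | _ i IH =>
    intro hi
    rcases eq_or_lt_of_le hi with h1 | h2
    · refine ⟨S, ?_, ?_⟩
      · rw [← h1, casub_one]
        exact Set.subset_univ _
      · rw [← h1]
        intro x _
        have hx2 : x ∈ Loop.closure (S : Set L) := by rw [hS]; trivial
        exact closure_mono Set.subset_union_left hx2
    · have hi2 : 2 ≤ i := h2
      have EX : ∀ q, ∃ T : Finset L, 1 ≤ q → q < i →
          ((T : Set L) ⊆ casub L q ∧
            casub L q ⊆ Loop.closure ((T : Set L) ∪ casub L (q + 1))) := by
        intro q
        by_cases h : 1 ≤ q ∧ q < i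
        · obtain ⟨T, hT1, hT2⟩ := IH q h.2 h.1
          exact ⟨T, fun _ _ => ⟨hT1, hT2⟩⟩
        · exact ⟨∅, fun hq hqi => absurd ⟨hq, hqi⟩ h⟩
      choose Tset hTset using EX
      have hTC : ∀ q, 1 ≤ q → q < i → (Tset q : Set L) ⊆ casub L q :=
        fun q hq hqi => (hTset q hq hqi).1
      have hCT : ∀ q, 1 ≤ q → q < i →
          casub L q ⊆ Loop.closure ((Tset q : Set L) ∪ casub L (q + 1)) :=
        fun q hq hqi => (hTset q hq hqi).2
      set W : Set L := ⋃ q ∈ Set.Ico 1 i, (Tset q : Set L) with hW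
      have hWfin : W.Finite :=
        Set.Finite.biUnion (Set.finite_Ico 1 i) (fun q _ => (Tset q).finite_toSet)
      have hWsub : ∀ q, 1 ≤ q → q < i → (Tset q : Set L) ⊆ W := by
        intro q hq hqi x hx
        exact Set.mem_biUnion (show q ∈ Set.Ico 1 i from ⟨hq, hqi⟩) hx
      set P1 : Set (List ℕ) := {l | l.length ≤ i ∧ ∀ a ∈ l, a ∈ Set.Iic (i + 3)} with hP1
      set P2 : Set (List L) := {l | l.length ≤ i ∧ ∀ a ∈ l, a ∈ W} with hP2
      have hP1fin : P1.Finite := finite_lists i _ (Set.finite_Iic (i + 3))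
      have hP2fin : P2.Finite := finite_lists i _ hWfin
      set TTset : Set L :=
        (Set.image2 Loop.comm W W ∪ Set.image2 Loop.dev P1 P2) ∩ casub L i with hTT
      have hTTfin : TTset.Finite :=
        Set.Finite.inter_of_left
          (Set.Finite.union (Set.Finite.image2 _ hWfin hWfin)
            (Set.Finite.image2 _ hP1fin hP2fin)) _
      set NN : Set L := Loop.closure (TTset ∪ casub L (i + 1)) with hNN
      have hTTC : TTset ⊆ casub L i := Set.inter_subset_right
      have hNsub : IsSubloop NN := closure_isSubloop _
      have hKN : casub L (i + 1) ⊆ NN :=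
        (Set.subset_union_right).trans (subset_closure _)
      have hTTN : TTset ⊆ NN := (Set.subset_union_left).trans (subset_closure _)
      have hNC : NN ⊆ casub L i :=
        closure_subset (casub_isSubloop i)
          (Set.union_subset hTTC (casub_anti hi (by omega)))
      have hbase_comm : ∀ p q, 1 ≤ p → p < i → 1 ≤ q → q < i → p + q = i →
          ∀ t ∈ (Tset p : Set L), ∀ u ∈ (Tset q : Set L), Loop.comm t u ∈ NN := by
        intro p q hp hpi hq hqi hpq t ht u hu
        refine hTTN ⟨Or.inl ?_, ?_⟩
        · exact Set.mem_image2_of_mem (hWsub p hp hpi ht) (hWsub q hq hqi hu)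
        · exact casub_comm_mem hp hq (by omega) (hTC p hp hpi ht) (hTC q hq hqi hu)
      have hbase_dev : ∀ (idx ps : List ℕ) (xs : List L),
          ps.length = idx.length + 3 → xs.length = idx.length + 3 →
          (∀ j < idx.length, 1 ≤ idx.getD j 0 ∧ idx.getD j 0 ≤ (idx.length - j) + 2) →
          (∀ j < ps.length, 1 ≤ ps.getD j 0 ∧ ps.getD j 0 < i ∧
            xs.getD j 1 ∈ (Tset (ps.getD j 0) : Set L)) →
          ps.sum = i → Loop.dev idx xs ∈ NN := by
        intro idx ps xs hlen hxlen hbound hmem hsum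
        have hpos : ∀ x ∈ ps, 1 ≤ x := pos_entries (fun j hj => (hmem j hj).1)
        have hplen : ps.length ≤ i := by
          have := length_le_sum hpos
          omega
        refine hTTN ⟨Or.inr ?_, ?_⟩
        · refine Set.mem_image2_of_mem ?_ ?_
          · refine ⟨by omega, ?_⟩
            intro a ha
            obtain ⟨n, hn, rfl⟩ := List.mem_iff_getElem.mp ha
            have hb := hbound n hn
            rw [List.getD_eq_getElem _ _ hn] at hb
            exact Set.mem_Iic.mpr (by omega)
          · refine ⟨by omega, ?_⟩
            intro a ha
            obtain ⟨n, hn, rfl⟩ := List.mem_iff_getElem.mp ha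
            have hb := hmem n (by omega)
            rw [List.getD_eq_getElem _ _ hn] at hb
            exact hWsub _ hb.1 hb.2.1 hb.2.2
        · exact dev_mem_casub_any hlen hxlen hbound
            (fun j hj => ⟨(hmem j hj).1,
              hTC _ (hmem j hj).1 (hmem j hj).2.1 (hmem j hj).2.2⟩)
            (le_of_eq hsum.symm)
      set Mfam : ℕ → Set L := fun j => if j = i then NN else casub L j with hM
      have hMi : Mfam i = NN := by simp [hM]
      have hMne : ∀ j, j ≠ i → Mfam j = casub L j := by
        intro j h
        simp [hM, h]
      have hMsub : ∀ j, Mfam j ⊆ casub L j := by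
        intro j
        by_cases h : j = i
        · subst h
          rw [hMi]
          exact hNC
        · rw [hMne j h]
      have hMnorm : ∀ j, IsNormal (Mfam j) := by
        intro j
        by_cases h : j = i
        · subst h
          rw [hMi]
          exact normal_of_central hNsub hKN hNC (by omega)
        · rw [hMne j h]
          exact casub_normal j
      have hMone : Mfam 1 = Set.univ := by
        rw [hMne 1 (by omega)]
        exact casub_one
      have hMcomm : ∀ i' p q, 1 ≤ p → 1 ≤ q → i' ≤ p + q →
          ∀ a ∈ Mfam p, ∀ b ∈ Mfam q, Loop.comm a b ∈ Mfam i' := by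
        intro i' p q hp hq hpq a ha b hb
        have ha' := hMsub p ha
        have hb' := hMsub q hb
        by_cases h : i' = i
        · subst h
          rw [hMi]
          rcases Nat.lt_or_ge (p + q) (i' + 1) with hlt | hge
          · exact comm_machine hNsub hKN hTC hCT hbase_comm p q hp hq (by omega) a ha' b hb'
          · exact hKN (casub_comm_mem hp hq hge ha' hb')
        · rw [hMne i' h]
          exact casub_comm_mem hp hq hpq ha' hb'
      have hMassoc : ∀ i' p q r, 1 ≤ p → 1 ≤ q → 1 ≤ r → i' ≤ p + q + r →
          ∀ a ∈ Mfam p, ∀ b ∈ Mfam q, ∀ c ∈ Mfam r, Loop.assoc a b c ∈ Mfam i' := by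
        intro i' p q r hp hq hr hs a ha b hb c hc
        have ha' := hMsub p ha
        have hb' := hMsub q hb
        have hc' := hMsub r hc
        by_cases h : i' = i
        · subst h
          rw [hMi]
          rcases Nat.lt_or_ge (p + q + r) (i' + 1) with hlt | hge
          · have hsum : List.sum [p, q, r] = i' := by
              simp only [List.sum_cons, List.sum_nil]
              omega
            have hres := dev_machine hNsub hKN hTC hCT hbase_dev [] [p, q, r] [a, b, c]
              (by simp) (by simp) (by intro j hj; simp at hj) ?_ hsum
            · exact hres
            · intro j hj
              simp only [List.length_cons, List.length_nil] at hj
              interval_cases j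
              · exact ⟨hp, ha'⟩
              · exact ⟨hq, hb'⟩
              · exact ⟨hr, hc'⟩
          · exact hKN (casub_assoc_mem hp hq hr hge ha' hb' hc')
        · rw [hMne i' h]
          exact casub_assoc_mem hp hq hr hs ha' hb' hc'
      have hMdev : ∀ (i' : ℕ) (idx ps : List ℕ) (xs : List L), idx ≠ [] →
          ps.length = idx.length + 3 → xs.length = idx.length + 3 →
          (∀ j < idx.length, 1 ≤ idx.getD j 0 ∧ idx.getD j 0 ≤ (idx.length - j) + 2) →
          (∀ j < ps.length, 1 ≤ ps.getD j 0 ∧ xs.getD j 1 ∈ Mfam (ps.getD j 0)) →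
          i' ≤ ps.sum → Loop.dev idx xs ∈ Mfam i' := by
        intro i' idx ps xs hne hlen hxlen hbound hmem hsum
        have hmem' : ∀ j < ps.length, 1 ≤ ps.getD j 0 ∧
            xs.getD j 1 ∈ casub L (ps.getD j 0) :=
          fun j hj => ⟨(hmem j hj).1, hMsub _ (hmem j hj).2⟩
        by_cases h : i' = i
        · subst h
          rw [hMi]
          rcases Nat.lt_or_ge ps.sum (i' + 1) with hlt | hge
          · exact dev_machine hNsub hKN hTC hCT hbase_dev idx ps xs hlen hxlen hbound
              hmem' (by omega)
          · exact hKN (casub_dev_mem hne hlen hxlen hbound hmem' hge)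
        · rw [hMne i' h]
          exact casub_dev_mem hne hlen hxlen hbound hmem' hsum
      have hAdm : Admissible Mfam := ⟨hMnorm, hMone, hMcomm, hMassoc, hMdev⟩
      refine ⟨hTTfin.toFinset, ?_, ?_⟩
      · rw [Set.Finite.coe_toFinset]
        exact hTTC
      · rw [Set.Finite.coe_toFinset]
        intro x hx
        rw [mem_casub] at hx
        have hx2 := hx Mfam hAdm
        rw [hMi] at hx2
        rw [← hNN]
        exact hx2

end CAProof

/-- if `L` is a finitely generated loop, then for every `i ≥ 1`
the abelian group `L_i/L_{i+1}` is finitely generated, i.e. there is a finite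
subset `T` of `L_i` such that `L_i` is contained in the subloop generated by
`T` together with `L_{i+1}`. -/
theorem casub_quotient_fg {L : Type*} [Loop L]
    (hfg : ∃ S : Finset L, Loop.closure (S : Set L) = Set.univ) :
    ∀ i : ℕ, 1 ≤ i →
      ∃ T : Finset L, (T : Set L) ⊆ Loop.casub L i ∧
        Loop.casub L i ⊆ Loop.closure ((T : Set L) ∪ Loop.casub L (i + 1)) :=
  CAProof.main_fg hfg
end
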